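/- arXiv:2111.05566 — 9 statements merged into one kernel-verified Lean document; each statement's English description precedes it below -/
import Mathlib

section
/- Let G = PSL(2,7). The set of pairs (x,y) of elements of G with orderOf x = 7, orderOf y = 2 and orderOf (x*y) = 7 is nonempty, and any two such pairs are Aut-equivalent: for any two pairs (x,y), (x',y') with these orders there is a group automorphism α of G such that α x = x' and α y = y'. (Hence there is a unique orientably regular map of type {7,7} with orientation-preserving automorphism group G.) -/
open Matrix

/-- `PSL(2,7)`: the quotient of `SL(2, ZMod 7)` by its center. -/
abbrev PSL27 : Type := Matrix.ProjectiveSpecialLinearGroup (Fin 2) (ZMod 7)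

/-!
Lift a pair `(x, y)` of type `(7, 2, 7)` to `A, B ∈ SL(2, 𝔽₇)`. Over `𝔽_p` one has
`tr (A ^ p) = (tr A) ^ p = tr A`, so `A` maps to an element of order `p` iff `A ≠ ±1` and
`tr A = ±2`, while `B` maps to an involution iff `tr B = 0`; choosing the signs of the lifts,
`tr A = tr (A * B) = 2` and `tr B = 0`. `GL(2, 𝔽₇)` acts transitively by conjugation on such
pairs: `A` is conjugate to `T = !![1, 1; 0, 1]`, after which `B` has lower left entry
`tr (T * B) - tr B = 2`, and conjugating by `!![1, s; 0, 1]`, which commutes with `T`, moves `B`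
to any other such matrix. Conjugation by `GL(2, 𝔽₇)` preserves the centre `±1`, so it induces
automorphisms of `PSL(2, 7)`.
-/

open scoped MatrixGroups

namespace Matrix.SpecialLinearGroup

section Conj

variable {n R : Type*} [Fintype n] [DecidableEq n] [CommRing R]

lemma coe_inj {A B : SpecialLinearGroup n R} : (A : Matrix n n R) = B ↔ A = B :=
  Subtype.ext_iff.symm

instance : SMul (GL n R) (SpecialLinearGroup n R) where
  smul g A := ⟨g * A * g⁻¹, by
    rw [det_mul, det_mul, A.det_coe, mul_one, ← det_mul, ← Units.val_mul, mul_inv_cancel,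
      Units.val_one, det_one]⟩

lemma coe_GL_smul (g : GL n R) (A : SpecialLinearGroup n R) :
    ((g • A : SpecialLinearGroup n R) : Matrix n n R) = g * A * (g⁻¹ : GL n R) :=
  rfl

instance : MulDistribMulAction (GL n R) (SpecialLinearGroup n R) where
  one_smul A := by ext : 1; simp [coe_GL_smul]
  mul_smul g h A := by ext : 1; simp [coe_GL_smul, mul_assoc]
  smul_mul g A B := by ext : 1; simp [coe_GL_smul, mul_assoc]
  smul_one g := by ext : 1; simp [coe_GL_smul]

lemma GL_smul_eq_iff (g : GL n R) (A B : SpecialLinearGroup n R) :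
    g • A = B ↔ (g : Matrix n n R) * A = B * g := by
  rw [← coe_inj, coe_GL_smul, Units.mul_inv_eq_iff_eq_mul]

lemma trace_coe_GL_smul (g : GL n R) (A : SpecialLinearGroup n R) :
    ((g • A : SpecialLinearGroup n R) : Matrix n n R).trace = (A : Matrix n n R).trace :=
  trace_units_conj g A

end Conj

section CommRing

variable {R : Type*} [CommRing R]

lemma coe_add_coe_inv (A : SL(2, R)) :
    (A : Matrix (Fin 2) (Fin 2) R) + (A⁻¹ : SL(2, R)) =
      scalar (Fin 2) (A : Matrix (Fin 2) (Fin 2) R).trace := by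
  rw [coe_inv, adjugate_fin_two, eta_fin_two (A : Matrix (Fin 2) (Fin 2) R)]
  ext i j; fin_cases i <;> fin_cases j <;> simp [trace_fin_two, add_comm]

lemma sq_eq_neg_one_iff_trace_eq_zero (A : SL(2, R)) :
    A ^ 2 = -1 ↔ (A : Matrix (Fin 2) (Fin 2) R).trace = 0 := by
  rw [sq, ← neg_eq_iff_eq_neg, ← mul_neg, mul_eq_one_iff_inv_eq, ← coe_inj, coe_neg,
    ← sub_eq_zero, sub_neg_eq_add, add_comm, coe_add_coe_inv, ← (scalar (Fin 2)).map_zero,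
    scalar_inj]

lemma sub_one_sq_eq_zero {A : SL(2, R)} (hA : (A : Matrix (Fin 2) (Fin 2) R).trace = 2) :
    ((A : Matrix (Fin 2) (Fin 2) R) - 1) ^ 2 = 0 := by
  have hdet := A.det_coe
  rw [det_fin_two] at hdet
  rw [trace_fin_two] at hA
  ext i j
  fin_cases i <;> fin_cases j <;>
    simp only [Fin.zero_eta, Fin.mk_one, Fin.isValue, sq, mul_apply, sub_apply, Fin.sum_univ_two,
      one_apply_eq, one_apply_ne, ne_eq, zero_ne_one, one_ne_zero, not_false_eq_true, sub_zero,
      zero_apply]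
  · linear_combination A 0 0 * hA - hdet
  · linear_combination A 0 1 * hA
  · linear_combination A 1 0 * hA
  · linear_combination A 1 1 * hA - hdet

lemma pow_char_eq_one_of_trace_eq_two (p : ℕ) [Fact p.Prime] [CharP R p] {A : SL(2, R)}
    (hA : (A : Matrix (Fin 2) (Fin 2) R).trace = 2) : A ^ p = 1 := by
  have hN : ((A : Matrix (Fin 2) (Fin 2) R) - 1) ^ p = 0 :=
    pow_eq_zero_of_le (Fact.out : p.Prime).two_le (sub_one_sq_eq_zero hA)
  rw [← coe_inj, coe_pow, coe_one, ← sub_add_cancel (A : Matrix (Fin 2) (Fin 2) R) 1,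
    add_pow_char_of_commute p (Commute.one_right _), hN, one_pow, zero_add]

lemma trace_pow_char (p : ℕ) [Fact p.Prime] [CharP R p] (A : SL(2, R)) :
    ((A ^ p : SL(2, R)) : Matrix (Fin 2) (Fin 2) R).trace =
      (A : Matrix (Fin 2) (Fin 2) R).trace ^ p := by
  have hcomm : Commute (A : Matrix (Fin 2) (Fin 2) R) (A⁻¹ : SL(2, R)) := by
    rw [Commute, SemiconjBy, ← coe_mul, ← coe_mul, mul_inv_cancel, inv_mul_cancel]
  rw [← scalar_inj (n := Fin 2), ← coe_add_coe_inv, map_pow, ← coe_add_coe_inv, ← inv_pow,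
    coe_pow, coe_pow, add_pow_char_of_commute p hcomm]

def T : SL(2, R) := ⟨!![1, 1; 0, 1], by simp⟩

lemma coe_T : ((T : SL(2, R)) : Matrix (Fin 2) (Fin 2) R) =
    (GeneralLinearGroup.upperRightHom (1 : R) : GL (Fin 2) R) :=
  rfl

lemma upperRightHom_smul_T (s : R) :
    GeneralLinearGroup.upperRightHom s • (T : SL(2, R)) = T := by
  rw [GL_smul_eq_iff, coe_T, ← Units.val_mul, ← Units.val_mul, ← AddChar.map_add_eq_mul,
    ← AddChar.map_add_eq_mul, add_comm]

end CommRing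

section Field

variable {K : Type*} [Field K]

lemma mem_center_iff_eq_one_or_eq_neg_one {A : SL(2, K)} :
    A ∈ Subgroup.center SL(2, K) ↔ A = 1 ∨ A = -1 := by
  rw [mem_center_iff]
  simp [sq, mul_self_eq_one_iff, or_and_right, exists_or, ← coe_inj, eq_comm, ← diagonal_neg]

lemma eq_one_or_eq_neg_one_of_sq_eq_one (h2 : (2 : K) ≠ 0) {A : SL(2, K)} (hA : A ^ 2 = 1) :
    A = 1 ∨ A = -1 := by
  rw [sq, mul_eq_one_iff_inv_eq, ← coe_inj, coe_inv, adjugate_fin_two] at hA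
  have h00 := congr_fun₂ hA 0 0
  have h01 := congr_fun₂ hA 0 1
  have h10 := congr_fun₂ hA 1 0
  simp only [of_apply, cons_val', cons_val_zero, cons_val_one, empty_val', cons_val_fin_one]
    at h00 h01 h10
  have hb : A 0 1 = 0 :=
    (mul_eq_zero.mp (by linear_combination -h01 : 2 * A 0 1 = 0)).resolve_left h2
  have hc : A 1 0 = 0 :=
    (mul_eq_zero.mp (by linear_combination -h10 : 2 * A 1 0 = 0)).resolve_left h2
  have hdet := A.det_coe
  rw [det_fin_two, hb, zero_mul, sub_zero, h00] at hdet
  rcases mul_self_eq_one_iff.mp hdet with ha | ha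
  · left; ext i j; fin_cases i <;> fin_cases j <;> simp [ha, hb, hc, h00]
  · right; ext i j; fin_cases i <;> fin_cases j <;> simp [ha, hb, hc, h00]

/-- The conjugating matrix has columns `(A - 1) v` and `v` for a vector `v` not killed by
`A - 1`. -/
lemma exists_GL_smul_T_eq {A : SL(2, K)} (hA : (A : Matrix (Fin 2) (Fin 2) K).trace = 2)
    (hA1 : A ≠ 1) : ∃ g : GL (Fin 2) K, g • T = A := by
  have hdet := A.det_coe
  rw [det_fin_two] at hdet
  rw [trace_fin_two] at hA
  by_cases hc : A 1 0 = 0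
  · have ha : A 0 0 = 1 := by
      have : (A 0 0 - 1) ^ 2 = 0 := by linear_combination A 0 0 * hA - hdet - A 0 1 * hc
      simpa [sub_eq_zero] using this
    have hd : A 1 1 = 1 := by linear_combination hA - ha
    have hb : A 0 1 ≠ 0 := fun hb => hA1 <| by
      ext i j; fin_cases i <;> fin_cases j <;> simp [ha, hb, hc, hd]
    refine ⟨GeneralLinearGroup.mkOfDetNeZero !![A 0 1, 0; 0, 1] (by simpa using hb), ?_⟩
    rw [GL_smul_eq_iff, coe_T]
    ext i j; fin_cases i <;> fin_cases j <;>
      simp [GeneralLinearGroup.mkOfDetNeZero, mul_apply, Fin.sum_univ_two, ha, hc, hd]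
  · refine ⟨GeneralLinearGroup.mkOfDetNeZero !![A 0 0 - 1, 1; A 1 0, 0] (by simpa using hc),
      ?_⟩
    rw [GL_smul_eq_iff, coe_T]
    ext i j
    fin_cases i <;> fin_cases j <;>
      simp only [GeneralLinearGroup.mkOfDetNeZero, GeneralLinearGroup.val_mk',
        GeneralLinearGroup.upperRightHom_apply, Fin.zero_eta, Fin.mk_one, Fin.isValue, mul_apply,
        of_apply, cons_val', cons_val_fin_one, cons_val_zero, cons_val_one, Fin.sum_univ_two,
        mul_one, mul_zero, add_zero, sub_add_cancel]
    · linear_combination hdet - A 0 0 * hA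
    · linear_combination -A 1 0 * hA

lemma exists_upperRightHom_smul_eq {B B' : SL(2, K)}
    (hB : (B : Matrix (Fin 2) (Fin 2) K).trace = 0)
    (hB' : (B' : Matrix (Fin 2) (Fin 2) K).trace = 0) (hc : B 1 0 = B' 1 0) (hc0 : B 1 0 ≠ 0) :
    ∃ s : K, GeneralLinearGroup.upperRightHom s • B = B' := by
  have hdet := B.det_coe
  have hdet' := B'.det_coe
  rw [det_fin_two] at hdet hdet'
  rw [trace_fin_two] at hB hB'
  obtain ⟨s, hs⟩ : ∃ s, s * B 1 0 = B' 0 0 - B 0 0 := ⟨_, div_mul_cancel₀ _ hc0⟩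
  refine ⟨s, (GL_smul_eq_iff _ _ _).2 ?_⟩
  ext i j
  fin_cases i <;> fin_cases j <;>
    simp only [GeneralLinearGroup.upperRightHom_apply, Fin.zero_eta, Fin.mk_one, Fin.isValue,
      mul_apply, of_apply, cons_val', cons_val_fin_one, cons_val_zero, cons_val_one,
      Fin.sum_univ_two, zero_mul, one_mul, zero_add, mul_one, mul_zero, add_zero]
  · linear_combination hs
  · refine mul_right_cancel₀ hc0 ?_
    linear_combination (B 1 1 - B' 0 0) * hs - hdet + hdet' + B' 0 0 * hB - B' 0 0 * hB' -
      B' 0 1 * hc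
  · exact hc
  · linear_combination -hs + s * hc + hB - hB'

end Field

structure IsUnipotentPair {R : Type*} [CommRing R] (A B : SL(2, R)) : Prop where
  trace_fst : (A : Matrix (Fin 2) (Fin 2) R).trace = 2
  fst_ne_one : A ≠ 1
  trace_snd : (B : Matrix (Fin 2) (Fin 2) R).trace = 0
  trace_mul : ((A * B : SL(2, R)) : Matrix (Fin 2) (Fin 2) R).trace = 2

namespace IsUnipotentPair

variable {R K : Type*} [CommRing R] [Field K]

lemma GL_smul {A B : SL(2, R)} (h : IsUnipotentPair A B) (g : GL (Fin 2) R) :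
    IsUnipotentPair (g • A) (g • B) where
  trace_fst := by rw [trace_coe_GL_smul]; exact h.trace_fst
  fst_ne_one := by rw [Ne, smul_eq_iff_eq_inv_smul, smul_one]; exact h.fst_ne_one
  trace_snd := by rw [trace_coe_GL_smul]; exact h.trace_snd
  trace_mul := by rw [← smul_mul', trace_coe_GL_smul]; exact h.trace_mul

lemma snd_one_zero_of_fst_eq_T {B : SL(2, R)} (h : IsUnipotentPair T B) : B 1 0 = 2 := by
  have hmul := h.trace_mul
  have hsnd := h.trace_snd
  rw [coe_mul, coe_T, trace_fin_two] at hmul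
  rw [trace_fin_two] at hsnd
  simp only [GeneralLinearGroup.upperRightHom_apply, Fin.isValue, mul_apply, of_apply, cons_val',
    cons_val_fin_one, cons_val_zero, cons_val_one, Fin.sum_univ_two, zero_mul, one_mul, zero_add]
    at hmul
  linear_combination hmul - hsnd

lemma exists_GL_smul_eq (h2 : (2 : K) ≠ 0) {A B A' B' : SL(2, K)} (h : IsUnipotentPair A B)
    (h' : IsUnipotentPair A' B') : ∃ g : GL (Fin 2) K, g • A = A' ∧ g • B = B' := by
  obtain ⟨g, rfl⟩ := exists_GL_smul_T_eq h.trace_fst h.fst_ne_one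
  obtain ⟨g', rfl⟩ := exists_GL_smul_T_eq h'.trace_fst h'.fst_ne_one
  have hB := h.GL_smul g⁻¹
  have hB' := h'.GL_smul g'⁻¹
  rw [inv_smul_smul] at hB hB'
  obtain ⟨s, hs⟩ := exists_upperRightHom_smul_eq hB.trace_snd hB'.trace_snd
    (by rw [hB.snd_one_zero_of_fst_eq_T, hB'.snd_one_zero_of_fst_eq_T])
    (by rwa [hB.snd_one_zero_of_fst_eq_T])
  refine ⟨g' * GeneralLinearGroup.upperRightHom s * g⁻¹, ?_, ?_⟩
  · rw [mul_smul, mul_smul, inv_smul_smul, upperRightHom_smul_T]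
  · rw [mul_smul, mul_smul, hs, smul_inv_smul]

end IsUnipotentPair

end Matrix.SpecialLinearGroup

open Matrix.SpecialLinearGroup

namespace Matrix.ProjectiveSpecialLinearGroup

section Conj

variable {n R : Type*} [Fintype n] [DecidableEq n] [CommRing R]

def conjGL (g : GL n R) : ProjectiveSpecialLinearGroup n R ≃* ProjectiveSpecialLinearGroup n R :=
  QuotientGroup.congr _ _ (MulDistribMulAction.toMulEquiv _ g)
    (Subgroup.characteristic_iff_map_eq.mp inferInstance _)

lemma conjGL_coe (g : GL n R) (A : SpecialLinearGroup n R) :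
    conjGL g (A : ProjectiveSpecialLinearGroup n R) = ↑(g • A) :=
  QuotientGroup.congr_mk _ _ _ _ A

end Conj

variable {K : Type*} [Field K]

lemma coe_eq_one_iff {A : SL(2, K)} : (A : PSL(2, K)) = 1 ↔ A = 1 ∨ A = -1 := by
  rw [QuotientGroup.eq_one_iff, mem_center_iff_eq_one_or_eq_neg_one]

lemma coe_neg (A : SL(2, K)) : ((-A : SL(2, K)) : PSL(2, K)) = A := by
  rw [← neg_one_mul, QuotientGroup.mk_mul, coe_eq_one_iff.mpr (Or.inr rfl), one_mul]

lemma orderOf_coe_eq_two_iff (h2 : (2 : K) ≠ 0) (A : SL(2, K)) :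
    orderOf (A : PSL(2, K)) = 2 ↔ (A : Matrix (Fin 2) (Fin 2) K).trace = 0 := by
  rw [orderOf_eq_prime_iff, ← QuotientGroup.mk_pow, coe_eq_one_iff, Ne, coe_eq_one_iff,
    ← sq_eq_neg_one_iff_trace_eq_zero]
  have h1 : (1 : SL(2, K)) ≠ -1 := fun h => h2 <| by
    have h00 := congr_fun₂ (coe_inj.mpr h) 0 0
    simp only [coe_one, SpecialLinearGroup.coe_neg, one_apply_eq, neg_apply] at h00
    linear_combination h00
  constructor
  · rintro ⟨h | h, hA⟩
    · exact absurd (eq_one_or_eq_neg_one_of_sq_eq_one h2 h) hA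
    · exact h
  · refine fun h => ⟨Or.inr h, ?_⟩
    rintro (rfl | rfl) <;> simp [h1] at h

lemma orderOf_coe_eq_prime_iff {p : ℕ} [Fact p.Prime] (A : SL(2, ZMod p)) :
    orderOf (A : PSL(2, ZMod p)) = p ↔
      ((A : Matrix (Fin 2) (Fin 2) (ZMod p)).trace = 2 ∨
        (A : Matrix (Fin 2) (Fin 2) (ZMod p)).trace = -2) ∧ ¬(A = 1 ∨ A = -1) := by
  rw [orderOf_eq_prime_iff, ← QuotientGroup.mk_pow, coe_eq_one_iff, Ne, coe_eq_one_iff]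
  refine and_congr_left fun _ => ⟨fun h => ?_, fun h => ?_⟩
  · rw [← ZMod.pow_card (A : Matrix (Fin 2) (Fin 2) (ZMod p)).trace, ← trace_pow_char]
    rcases h with h | h <;> simp [h]
  · rcases h with h | h
    · exact Or.inl (pow_char_eq_one_of_trace_eq_two p h)
    · have h' := pow_char_eq_one_of_trace_eq_two p (A := -A) (by simp [h])
      rw [neg_pow] at h'
      rcases neg_one_pow_eq_or SL(2, ZMod p) p with h1 | h1 <;> rw [h1] at h'
      · exact Or.inl (by simpa using h')
      · exact Or.inr (by rwa [neg_one_mul, neg_eq_iff_eq_neg] at h')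

lemma exists_isUnipotentPair_of_orderOf {p : ℕ} [Fact p.Prime] (hp : p ≠ 2)
    {x y : PSL(2, ZMod p)} (hx : orderOf x = p) (hy : orderOf y = 2) (hxy : orderOf (x * y) = p) :
    ∃ A B : SL(2, ZMod p), (A : PSL(2, ZMod p)) = x ∧ (B : PSL(2, ZMod p)) = y ∧
      IsUnipotentPair A B := by
  have h2 : (2 : ZMod p) ≠ 0 := fun h => hp <|
    (Nat.prime_dvd_prime_iff_eq Fact.out Nat.prime_two).mp <|
      (ZMod.natCast_eq_zero_iff 2 p).mp (by exact_mod_cast h)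
  obtain ⟨A, rfl, hA, hA1⟩ : ∃ A : SL(2, ZMod p), (A : PSL(2, ZMod p)) = x ∧
      (A : Matrix (Fin 2) (Fin 2) (ZMod p)).trace = 2 ∧ A ≠ 1 := by
    obtain ⟨A, rfl⟩ := QuotientGroup.mk_surjective x
    obtain ⟨htr | htr, hne⟩ := (orderOf_coe_eq_prime_iff A).mp hx
    · exact ⟨A, rfl, htr, fun h => hne (Or.inl h)⟩
    · exact ⟨-A, coe_neg A, by simp [htr], fun h => hne (Or.inr (neg_eq_iff_eq_neg.mp h))⟩
  obtain ⟨B, rfl, hB, hAB⟩ : ∃ B : SL(2, ZMod p), (B : PSL(2, ZMod p)) = y ∧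
      (B : Matrix (Fin 2) (Fin 2) (ZMod p)).trace = 0 ∧
      ((A * B : SL(2, ZMod p)) : Matrix (Fin 2) (Fin 2) (ZMod p)).trace = 2 := by
    obtain ⟨B, rfl⟩ := QuotientGroup.mk_surjective y
    have hB := (orderOf_coe_eq_two_iff h2 B).mp hy
    rw [← QuotientGroup.mk_mul, orderOf_coe_eq_prime_iff] at hxy
    obtain ⟨htr | htr, -⟩ := hxy
    · exact ⟨B, rfl, hB, htr⟩
    · refine ⟨-B, coe_neg B, by simp [hB], ?_⟩
      rw [mul_neg, SpecialLinearGroup.coe_neg, trace_neg, htr, neg_neg]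
  exact ⟨A, B, rfl, rfl, ⟨hA, hA1, hB, hAB⟩⟩

end Matrix.ProjectiveSpecialLinearGroup

instance : Fact (Nat.Prime 7) := ⟨by norm_num⟩

def involution₇ : SL(2, ZMod 7) := ⟨!![0, 3; 2, 0], by decide⟩

open Matrix.ProjectiveSpecialLinearGroup in
/-- There is a pair `(x, y)` in `PSL(2,7)` of type `(7,2,7)`, and any two such pairs
are equivalent under an automorphism of the group. -/
theorem psl27_727_pairs_nonempty_and_aut_transitive :
    (∃ x y : PSL27, orderOf x = 7 ∧ orderOf y = 2 ∧ orderOf (x * y) = 7) ∧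
    (∀ x y x' y' : PSL27,
      orderOf x = 7 → orderOf y = 2 → orderOf (x * y) = 7 →
      orderOf x' = 7 → orderOf y' = 2 → orderOf (x' * y') = 7 →
      ∃ α : PSL27 ≃* PSL27, α x = x' ∧ α y = y') := by
  have h2 : (2 : ZMod 7) ≠ 0 := by decide
  refine ⟨⟨((T : SL(2, ZMod 7)) : PSL27), involution₇, ?_, ?_, ?_⟩,
    fun x y x' y' hx hy hxy hx' hy' hxy' => ?_⟩
  · exact (orderOf_coe_eq_prime_iff _).mpr ⟨Or.inl (by decide), by decide⟩
  · exact (orderOf_coe_eq_two_iff h2 _).mpr (by decide)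
  · rw [← QuotientGroup.mk_mul]
    exact (orderOf_coe_eq_prime_iff _).mpr ⟨Or.inl (by decide), by decide⟩
  · obtain ⟨A, B, rfl, rfl, hAB⟩ := exists_isUnipotentPair_of_orderOf (by norm_num) hx hy hxy
    obtain ⟨A', B', rfl, rfl, hAB'⟩ :=
      exists_isUnipotentPair_of_orderOf (by norm_num) hx' hy' hxy'
    obtain ⟨g, rfl, rfl⟩ := hAB.exists_GL_smul_eq h2 hAB'
    exact ⟨conjGL g, conjGL_coe g A, conjGL_coe g B⟩
end

section
/- Every subgroup H of G = PSL(2,7) whose order is divisible by 14 equals the whole group G. Consequently, for any x, y ∈ G with orderOf x = 7 and orderOf y = 2, the subgroup generated by {x, y} is all of G. -/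
/-!
`G = PSL(2,7)` is simple of order `168 = 2³ · 3 · 7`, so it has `8` Sylow `7`-subgroups, each with
normalizer of order `21`. If `14 ∣ |H|`, then `H` has `1` or `8` Sylow `7`-subgroups, and these
are Sylow `7`-subgroups of `G` because `7 ∥ 168`. With one, `H` normalizes it, so `|H|` divides
`21`, which is odd. With eight, `H` contains every Sylow `7`-subgroup of `G`, hence so does its
normal core, which by simplicity is then all of `G`.
-/

open Matrix

instance fact_prime_seven : Fact (Nat.Prime 7) := ⟨by norm_num⟩

section

variable {G : Type*} [Group G] [Finite G] {p : ℕ} [Fact p.Prime]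

theorem card_sylow_dvd_card : Nat.card (Sylow p G) ∣ Nat.card G := by
  obtain ⟨P⟩ := (inferInstance : Nonempty (Sylow p G))
  rw [P.card_eq_index_normalizer]
  exact Subgroup.index_dvd_card _

namespace Sylow

def mapSubtype {H : Subgroup G} (hH : ¬ p ∣ H.index) (Q : Sylow p H) : Sylow p G :=
  (Q.isPGroup'.map H.subtype).toSylow <| by
    rw [Subgroup.index_map_subtype]
    exact (Nat.Prime.dvd_mul Fact.out).not.mpr (not_or.mpr ⟨Q.not_dvd_index, hH⟩)

theorem coe_mapSubtype {H : Subgroup G} (hH : ¬ p ∣ H.index) (Q : Sylow p H) :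
    (mapSubtype hH Q : Subgroup G) = (Q : Subgroup H).map H.subtype :=
  rfl

theorem mapSubtype_injective {H : Subgroup G} (hH : ¬ p ∣ H.index) :
    Function.Injective (mapSubtype (p := p) hH) := fun _ _ h =>
  Sylow.ext <| Subgroup.map_injective H.subtype_injective <|
    congrArg ((↑) : Sylow p G → Subgroup G) h

theorem le_normalizer_mapSubtype {H : Subgroup G} (hH : ¬ p ∣ H.index)
    [Subsingleton (Sylow p H)] (Q : Sylow p H) :
    H ≤ Subgroup.normalizer (mapSubtype hH Q : Set G) := by
  have : ((mapSubtype hH Q : Subgroup G).subgroupOf H).Normal := by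
    rw [coe_mapSubtype, Subgroup.subgroupOf,
      Subgroup.comap_map_eq_self_of_injective H.subtype_injective]
    exact Q.normal_of_subsingleton
  exact Subgroup.le_normalizer_of_normal_subgroupOf (Subgroup.map_subtype_le _)

theorem le_of_card_sylow_eq {H : Subgroup G} (hH : ¬ p ∣ H.index)
    (h : Nat.card (Sylow p H) = Nat.card (Sylow p G)) (P : Sylow p G) :
    (P : Subgroup G) ≤ H := by
  obtain ⟨Q, rfl⟩ := ((mapSubtype_injective hH).bijective_of_nat_card_le h.ge).2 P
  exact Subgroup.map_subtype_le _

end Sylow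

theorem IsSimpleGroup.eq_top_of_forall_sylow_le [IsSimpleGroup G] (hp : p ∣ Nat.card G)
    {H : Subgroup G} (hH : ∀ P : Sylow p G, (P : Subgroup G) ≤ H) : H = ⊤ := by
  obtain ⟨P⟩ := (inferInstance : Nonempty (Sylow p G))
  have hP : (P : Subgroup G) ≤ H.normalCore := fun a ha b =>
    hH (b • P) (by rw [Sylow.coe_subgroup_smul]; exact Subgroup.smul_mem_pointwise_smul _ _ _ ha)
  rcases IsSimpleGroup.eq_bot_or_eq_top_of_normal _ H.normalCore_normal with h | h
  · exact absurd (le_bot_iff.mp (h ▸ hP)) (P.ne_bot_of_dvd_card hp)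
  · exact top_le_iff.mp (h ▸ H.normalCore_le)

end

theorem orderOf_mul_orderOf_dvd_card_closure_pair {G : Type*} [Group G] {x y : G}
    (h : (orderOf x).Coprime (orderOf y)) :
    orderOf x * orderOf y ∣ Nat.card (Subgroup.closure ({x, y} : Set G)) :=
  h.mul_dvd_of_dvd_of_dvd
    (Subgroup.orderOf_dvd_natCard _ (Subgroup.subset_closure (Set.mem_insert x {y})))
    (Subgroup.orderOf_dvd_natCard _
      (Subgroup.subset_closure (Set.mem_insert_of_mem x (Set.mem_singleton y))))

theorem card_sylow_seven_eq_one_or_eight {K : Type*} [Group K] [Finite K]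
    (hK : Nat.card K ∣ 168) : Nat.card (Sylow 7 K) = 1 ∨ Nat.card (Sylow 7 K) = 8 := by
  have hmod : Nat.card (Sylow 7 K) % 7 = 1 := card_sylow_modEq_one 7 K
  have hcop : Nat.Coprime (Nat.card (Sylow 7 K)) 7 :=
    ((Nat.Prime.coprime_iff_not_dvd Fact.out).mpr (not_dvd_card_sylow 7 K)).symm
  have h24 : Nat.card (Sylow 7 K) ∣ 24 :=
    hcop.dvd_of_dvd_mul_right (card_sylow_dvd_card.trans hK)
  have := Nat.le_of_dvd (by norm_num) h24
  interval_cases h : Nat.card (Sylow 7 K) <;> omega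

namespace PSL27

set_option maxRecDepth 100000 in
theorem card_specialLinearGroup : Nat.card (SpecialLinearGroup (Fin 2) (ZMod 7)) = 336 := by
  rw [Nat.card_eq_fintype_card]
  decide

theorem card_center_specialLinearGroup :
    Nat.card (Subgroup.center (SpecialLinearGroup (Fin 2) (ZMod 7))) = 2 := by
  rw [Nat.card_congr (SpecialLinearGroup.center_equiv_rootsOfUnity' 0).toEquiv]
  exact (IsPrimitiveRoot.neg_one 7 (by norm_num)).card_rootsOfUnity

theorem card : Nat.card PSL27 = 168 := by
  have := Subgroup.card_eq_card_quotient_mul_card_subgroup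
    (Subgroup.center (SpecialLinearGroup (Fin 2) (ZMod 7)))
  rw [card_specialLinearGroup, card_center_specialLinearGroup] at this
  change 336 = Nat.card PSL27 * 2 at this
  omega

instance : IsSimpleGroup PSL27 :=
  ProjectiveSpecialLinearGroup.rank_two_simple (by simp)

theorem card_sylow_seven : Nat.card (Sylow 7 PSL27) = 8 := by
  refine (card_sylow_seven_eq_one_or_eight card.dvd).resolve_left fun h => ?_
  have := (Nat.card_eq_one_iff_unique.mp h).1
  obtain ⟨P⟩ := (inferInstance : Nonempty (Sylow 7 PSL27))
  have hP := IsSimpleGroup.eq_top_of_forall_sylow_le (card ▸ by norm_num)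
    fun Q => (Subsingleton.elim Q P).le
  obtain ⟨k, hk⟩ := (hP ▸ P.isPGroup' : IsPGroup 7 (⊤ : Subgroup PSL27)).exists_card_eq
  rw [Subgroup.card_top, card] at hk
  exact absurd (Nat.prime_two.dvd_of_dvd_pow (hk ▸ by norm_num : 2 ∣ 7 ^ k)) (by norm_num)

theorem card_normalizer_sylow_seven (P : Sylow 7 PSL27) :
    Nat.card (Subgroup.normalizer (P : Set PSL27)) = 21 := by
  have := Subgroup.card_mul_index (Subgroup.normalizer (P : Set PSL27))
  rw [← P.card_eq_index_normalizer, card_sylow_seven, card] at this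
  omega

theorem not_seven_dvd_index {H : Subgroup PSL27} (h : 7 ∣ Nat.card H) : ¬ 7 ∣ H.index := by
  intro hi
  have h49 := Nat.mul_dvd_mul h hi
  rw [H.card_mul_index, card] at h49
  omega

theorem eq_top_of_fourteen_dvd_card {H : Subgroup PSL27} (h14 : 14 ∣ Nat.card H) : H = ⊤ := by
  have hH := not_seven_dvd_index (Nat.dvd_trans (by norm_num) h14)
  rcases card_sylow_seven_eq_one_or_eight (card ▸ H.card_subgroup_dvd_card) with h1 | h8
  · have := (Nat.card_eq_one_iff_unique.mp h1).1
    obtain ⟨Q⟩ := (inferInstance : Nonempty (Sylow 7 H))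
    have h21 := Subgroup.card_dvd_of_le (Sylow.le_normalizer_mapSubtype hH Q)
    rw [card_normalizer_sylow_seven] at h21
    exact absurd (h14.trans h21) (by norm_num)
  · exact IsSimpleGroup.eq_top_of_forall_sylow_le (card ▸ by norm_num)
      (Sylow.le_of_card_sylow_eq hH (h8.trans card_sylow_seven.symm))

end PSL27

open PSL27 in
/-- Every subgroup of `PSL(2,7)` of order divisible by `14` is the whole group;
hence any `x, y` of orders `7` and `2` generate `PSL(2,7)`. -/
theorem psl27_subgroup_card_div_14_eq_top :
    (∀ H : Subgroup PSL27, 14 ∣ Nat.card H → H = ⊤) ∧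
    (∀ x y : PSL27, orderOf x = 7 → orderOf y = 2 →
      Subgroup.closure ({x, y} : Set PSL27) = ⊤) := by
  refine ⟨fun H => eq_top_of_fourteen_dvd_card, fun x y hx hy => eq_top_of_fourteen_dvd_card ?_⟩
  have h := orderOf_mul_orderOf_dvd_card_closure_pair (x := x) (y := y) (by rw [hx, hy]; norm_num)
  rwa [hx, hy] at h
end

section
/- If x, y are elements of G = PSL(2,7) with orderOf x = 7, orderOf y = 2 and orderOf (x*y) = 7, then x is conjugate in G to (x*y)⁻¹. (In the Frobenius triple count, the contribution from pairs of distinct conjugacy classes of order-7 elements is zero.) -/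
/-!
An element of order 7 of `PSL(2,7)` lifts to a matrix `A` with `trace (A ^ 7) = trace A ^ 7 = trace A`,
so `trace A = ±2`; after a sign change `A` is unipotent, hence conjugate to `u a = upperUnipotent a = !![1, a; 0, 1]`.
An involution lifts to a matrix `B` of trace zero. If `u a * B` has order 7, then for the right
sign of `B` we get `trace (u a * B) = a * B 1 0 = 2`, and `(u a * B)⁻¹` is a trace-two matrix with
lower-left entry `-B 1 0`, hence conjugate to `u (B 1 0) = u (2 / a)`. As `2 = 3 ^ 2` in `ZMod 7`,
`u (2 / a) = u ((3 / a) ^ 2 * a)` is conjugate to `u a` by a diagonal matrix.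
-/

open Matrix

open scoped MatrixGroups

namespace Matrix.SpecialLinearGroup

section CommRing

variable {R : Type*} [CommRing R]

def upperUnipotent (b : R) : SL(2, R) := ⟨!![1, b; 0, 1], by simp [det_fin_two]⟩

lemma isConj_of_coe_mul_eq {n : Type*} [Fintype n] [DecidableEq n]
    {g M N : SpecialLinearGroup n R} (h : (g : Matrix n n R) * M = N * g) : IsConj M N :=
  ⟨toUnits g, Subtype.ext h⟩

lemma coe_upperUnipotent_mul (a : R) (B : SL(2, R)) :
    ((upperUnipotent a * B : SL(2, R)) : Matrix (Fin 2) (Fin 2) R) =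
      !![B 0 0 + a * B 1 0, B 0 1 + a * B 1 1; B 1 0, B 1 1] := by
  rw [coe_mul, eta_fin_two (B : Matrix (Fin 2) (Fin 2) R)]
  simp [upperUnipotent]

lemma trace_inv_fin_two (C : SL(2, R)) :
    trace ((C⁻¹ : SL(2, R)) : Matrix (Fin 2) (Fin 2) R) = trace (C : Matrix (Fin 2) (Fin 2) R) := by
  simp [SL2_inv_expl, trace, diag, add_comm]

lemma inv_apply_one_zero (C : SL(2, R)) : (C⁻¹ : SL(2, R)) 1 0 = -C 1 0 := by
  simp [SL2_inv_expl]

lemma mk_neg (A : SL(2, R)) : ((-A : SL(2, R)) : PSL(2, R)) = A := by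
  have h : (-1 : SL(2, R)) ∈ Subgroup.center SL(2, R) :=
    mem_center_iff.mpr ⟨-1, by norm_num, by ext i j; fin_cases i <;> fin_cases j <;> simp⟩
  rw [← mul_neg_one A, QuotientGroup.mk_mul_of_mem _ h]

end CommRing

section Field

variable {F : Type*} [Field F]

lemma isConj_upperUnipotent_of_trace_eq_two {M : SL(2, F)}
    (htr : trace (M : Matrix (Fin 2) (Fin 2) F) = 2) (hc : M 1 0 ≠ 0) :
    IsConj M (upperUnipotent (-M 1 0)) := by
  have hdet := M.det_coe
  rw [det_fin_two] at hdet
  rw [trace_fin_two] at htr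
  refine isConj_of_coe_mul_eq (g := ⟨!![0, 1; -1, (M 0 0 - 1) / M 1 0], by simp [det_fin_two]⟩) ?_
  rw [eta_fin_two (M : Matrix (Fin 2) (Fin 2) F)]
  simp only [upperUnipotent, mul_fin_two]
  ext i j
  fin_cases i <;> fin_cases j <;> simp <;> field_simp
  · linear_combination htr
  · ring
  · linear_combination hdet - htr

lemma exists_isConj_upperUnipotent {M : SL(2, F)}
    (htr : trace (M : Matrix (Fin 2) (Fin 2) F) = 2) : ∃ b, IsConj M (upperUnipotent b) := by
  by_cases hc : M 1 0 = 0
  · have hdet := M.det_coe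
    rw [det_fin_two, hc, mul_zero, sub_zero] at hdet
    rw [trace_fin_two] at htr
    have h00 : M 0 0 = 1 := by
      have : (M 0 0 - 1) ^ 2 = 0 := by linear_combination M 0 0 * htr - hdet
      exact sub_eq_zero.mp (pow_eq_zero_iff two_ne_zero |>.mp this)
    have h11 : M 1 1 = 1 := by linear_combination htr - h00
    have hM : upperUnipotent (M 0 1) = M := by
      ext i j
      fin_cases i <;> fin_cases j <;> simp [upperUnipotent, h00, h11, hc]
    exact ⟨M 0 1, by rw [hM]⟩
  · exact ⟨_, isConj_upperUnipotent_of_trace_eq_two htr hc⟩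

lemma isConj_upperUnipotent_mul_sq (b : F) {t : F} (ht : t ≠ 0) :
    IsConj (upperUnipotent b) (upperUnipotent (t ^ 2 * b)) := by
  refine isConj_of_coe_mul_eq (g := ⟨!![t, 0; 0, t⁻¹], by simp [det_fin_two, ht]⟩) ?_
  simp only [upperUnipotent, mul_fin_two]
  ext i j
  fin_cases i <;> fin_cases j <;> simp
  field_simp

lemma isConj_upperUnipotent_inv_mul (h2 : (2 : F) ≠ 0) (hsq : IsSquare (2 : F)) {a : F}
    {B : SL(2, F)} (hB : trace (B : Matrix (Fin 2) (Fin 2) F) = 0)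
    (hAB : trace ((upperUnipotent a * B : SL(2, F)) : Matrix (Fin 2) (Fin 2) F) = 2) :
    IsConj (upperUnipotent a) (upperUnipotent a * B)⁻¹ := by
  obtain ⟨s, hs⟩ := hsq
  have har : a * B 1 0 = 2 := by
    rw [coe_upperUnipotent_mul, trace_fin_two] at hAB
    rw [trace_fin_two] at hB
    simp only [of_apply, cons_val', cons_val_zero, cons_val_one, empty_val',
      cons_val_fin_one] at hAB
    linear_combination hAB - hB
  have ha : a ≠ 0 := left_ne_zero_of_mul (har ▸ h2)
  have hr : B 1 0 ≠ 0 := right_ne_zero_of_mul (har ▸ h2)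
  have hs0 : s ≠ 0 := by rintro rfl; exact h2 (by simpa using hs)
  have hinv : IsConj (upperUnipotent a * B)⁻¹ (upperUnipotent (B 1 0)) := by
    have h10 : ((upperUnipotent a * B)⁻¹ : SL(2, F)) 1 0 = -B 1 0 := by
      rw [inv_apply_one_zero, coe_upperUnipotent_mul]; simp
    simpa only [h10, neg_neg] using isConj_upperUnipotent_of_trace_eq_two
      ((trace_inv_fin_two _).trans hAB) (h10 ▸ neg_ne_zero.mpr hr)
  have hB10 : B 1 0 = (s / a) ^ 2 * a := by field_simp; linear_combination har + hs
  rw [hB10] at hinv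
  exact (isConj_upperUnipotent_mul_sq a (div_ne_zero hs0 ha)).trans hinv.symm

lemma trace_eq_zero_of_sq_mem_center {B : SL(2, F)} (hB : B ∉ Subgroup.center SL(2, F))
    (hB2 : B ^ 2 ∈ Subgroup.center SL(2, F)) : trace (B : Matrix (Fin 2) (Fin 2) F) = 0 := by
  obtain ⟨r, -, hr⟩ := mem_center_iff.mp hB2
  have e : ∀ i j, scalar (Fin 2) r i j = ((B : Matrix (Fin 2) (Fin 2) F) ^ 2) i j :=
    fun i j => by rw [hr, coe_pow]
  have h00 := e 0 0
  have h01 := e 0 1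
  have h10 := e 1 0
  have h11 := e 1 1
  simp only [scalar_apply, diagonal_apply_eq, diagonal_apply_ne, ne_eq, zero_ne_one, one_ne_zero,
    not_false_eq_true, sq, mul_apply, Fin.sum_univ_two] at h00 h01 h10 h11
  have hdet := B.det_coe
  rw [det_fin_two] at hdet
  rw [trace_fin_two]
  -- a nonzero trace would force `B` itself to be scalar, like `B ^ 2`
  by_contra hτ
  have b01 : B 0 1 = 0 :=
    (mul_eq_zero.mp (by linear_combination -h01 : B 0 1 * (B 0 0 + B 1 1) = 0)).resolve_right hτ
  have b10 : B 1 0 = 0 :=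
    (mul_eq_zero.mp (by linear_combination -h10 : B 1 0 * (B 0 0 + B 1 1) = 0)).resolve_right hτ
  have b11 : B 1 1 = B 0 0 := sub_eq_zero.mp <| (mul_eq_zero.mp
    (by linear_combination h00 - h11 : (B 1 1 - B 0 0) * (B 0 0 + B 1 1) = 0)).resolve_right hτ
  refine hB (mem_center_iff.mpr ⟨B 0 0, ?_, ?_⟩)
  · rw [b01, b11] at hdet
    rw [Fintype.card_fin]
    linear_combination hdet
  · ext i j
    fin_cases i <;> fin_cases j <;> simp [b01, b10, b11]

end Field

section ZMod

variable {p : ℕ} [Fact p.Prime]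

lemma trace_eq_two_or_neg_two_of_pow_mem_center {A : SL(2, ZMod p)}
    (h : A ^ p ∈ Subgroup.center SL(2, ZMod p)) :
    trace (A : Matrix (Fin 2) (Fin 2) (ZMod p)) = 2 ∨
      trace (A : Matrix (Fin 2) (Fin 2) (ZMod p)) = -2 := by
  obtain ⟨r, hr1, hr⟩ := mem_center_iff.mp h
  have htr : trace (A : Matrix (Fin 2) (Fin 2) (ZMod p)) = 2 * r := by
    rw [← ZMod.pow_card (trace _), ← ZMod.trace_pow_card, ← coe_pow, ← hr]
    simp
  rw [Fintype.card_fin, sq_eq_one_iff] at hr1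
  rcases hr1 with rfl | rfl <;> simp [htr]

lemma exists_isConj_mk_upperUnipotent {x : PSL(2, ZMod p)} (hx : x ^ p = 1) :
    ∃ b : ZMod p, IsConj x (upperUnipotent b : PSL(2, ZMod p)) := by
  obtain ⟨A, rfl⟩ := QuotientGroup.mk_surjective x
  have hA : A ^ p ∈ Subgroup.center SL(2, ZMod p) := by
    rwa [← QuotientGroup.eq_one_iff, QuotientGroup.mk_pow]
  obtain ⟨A', hA', htr⟩ : ∃ A' : SL(2, ZMod p), (A' : PSL(2, ZMod p)) = A ∧
      trace (A' : Matrix (Fin 2) (Fin 2) (ZMod p)) = 2 := by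
    rcases trace_eq_two_or_neg_two_of_pow_mem_center hA with h | h
    · exact ⟨A, rfl, h⟩
    · exact ⟨-A, mk_neg A, by simp [coe_neg, h]⟩
  obtain ⟨b, hb⟩ := exists_isConj_upperUnipotent htr
  rw [← hA']
  exact ⟨b, (QuotientGroup.mk' _).map_isConj hb⟩

lemma isConj_mk_upperUnipotent_inv_mul (hp : p ≠ 2) (hsq : IsSquare (2 : ZMod p)) (a : ZMod p)
    {y : PSL(2, ZMod p)} (hy : y ≠ 1) (hy2 : y ^ 2 = 1)
    (hxy : ((upperUnipotent a : PSL(2, ZMod p)) * y) ^ p = 1) :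
    IsConj (upperUnipotent a : PSL(2, ZMod p)) ((upperUnipotent a : PSL(2, ZMod p)) * y)⁻¹ := by
  have h2 : (2 : ZMod p) ≠ 0 := Ring.two_ne_zero (by rwa [ZMod.ringChar_zmod_n])
  obtain ⟨B, rfl⟩ := QuotientGroup.mk_surjective y
  have hB : trace (B : Matrix (Fin 2) (Fin 2) (ZMod p)) = 0 :=
    trace_eq_zero_of_sq_mem_center (by rwa [← QuotientGroup.eq_one_iff])
      (by rwa [← QuotientGroup.eq_one_iff, QuotientGroup.mk_pow])
  rw [← QuotientGroup.mk_mul, ← QuotientGroup.mk_pow, QuotientGroup.eq_one_iff] at hxy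
  rcases trace_eq_two_or_neg_two_of_pow_mem_center hxy with h | h
  · rw [← QuotientGroup.mk_mul]
    exact (QuotientGroup.mk' _).map_isConj (isConj_upperUnipotent_inv_mul h2 hsq hB h)
  · rw [← mk_neg B, ← QuotientGroup.mk_mul]
    exact (QuotientGroup.mk' _).map_isConj <| isConj_upperUnipotent_inv_mul h2 hsq
      (B := -B) (by rw [coe_neg, trace_neg, hB, neg_zero])
      (by rw [mul_neg, coe_neg, trace_neg, h, neg_neg])

end ZMod

end Matrix.SpecialLinearGroup

open Matrix.SpecialLinearGroup in
/-- In `PSL(2,7)`, if `x`, `y`, `x*y` have orders `7`, `2`, `7`, then `x` is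
conjugate to `(x*y)⁻¹`. -/
theorem psl27_727_conjugate (x y : PSL27)
    (hx : orderOf x = 7) (hy : orderOf y = 2) (hxy : orderOf (x * y) = 7) :
    IsConj x (x * y)⁻¹ := by
  have : Fact (Nat.Prime 7) := ⟨by norm_num⟩
  obtain ⟨a, hxa⟩ := exists_isConj_mk_upperUnipotent (orderOf_eq_prime_iff.mp hx).1
  obtain ⟨g, rfl⟩ := isConj_iff.mp hxa.symm
  obtain ⟨y, rfl⟩ := (MulAut.conj g).surjective y
  simp only [← MulAut.conj_apply, ← map_mul, ← map_inv, MulEquiv.orderOf_eq] at hxy hy ⊢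
  obtain ⟨hy2, hy1⟩ := orderOf_eq_prime_iff.mp hy
  exact (MulAut.conj g).toMonoidHom.map_isConj <| isConj_mk_upperUnipotent_inv_mul (by norm_num)
    ⟨3, rfl⟩ a hy1 hy2 (orderOf_eq_prime_iff.mp hxy).1
end

section
/- For every generating pair (x,y) of G = SL(2,𝔽₈) with orderOf x = 7, orderOf y = 2 and orderOf (x*y) = 7, there is no group automorphism α of G with α x = (x*y)⁻¹ and α y = y. (The two maps of type {7,7} with group SL(2,8) form a dual pair; neither is self-dual.) -/
/-!
From `α x = (x * y)⁻¹` and `α y = y` one gets `α² x = y⁻¹ x y`, so `α²` is conjugation by the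
involution `y`. Every involution of `SL(2, F)`, for `F` perfect of characteristic 2, is conjugate
to `u = !![1, 1; 0, 1]`, so there is an automorphism `β` fixing `u` with `β² = conj u`.
Such a `β` preserves the centraliser `{!![1, b; 0, 1]}` of `u` and acts on it through an additive
bijection `f` of `F` with `f 1 = 1` and `f² = id`; comparing with the conjugation action of the
diagonal torus shows that `f` is multiplicative, i.e. a field automorphism. As `Gal(𝔽₈/𝔽₂)` has
order 3, `f = id`. But then `β` fixes the unipotent group pointwise, which forces `β t = t u_c`
for a diagonal `t`, hence `β² t = t`, whereas `u` does not commute with `t`.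
-/

open Matrix

abbrev SL28 : Type := Matrix.SpecialLinearGroup (Fin 2) (GaloisField 2 3)

open Matrix.SpecialLinearGroup MatrixGroups

section MulAut

variable {G : Type*} [Group G]

lemma MulAut.sq_eq_conj_inv_of_closure_pair_eq_top {x y : G}
    (hgen : Subgroup.closure ({x, y} : Set G) = ⊤) {α : MulAut G}
    (hx : α x = (x * y)⁻¹) (hy : α y = y) : α ^ 2 = conj y⁻¹ := by
  refine MulEquiv.toMonoidHom_injective (MonoidHom.eq_of_eqOn_dense hgen ?_)
  rintro g (rfl | rfl | _)
  · simp [sq, hx, hy, mul_assoc]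
  · simp_all [sq]

lemma IsConj.exists_mulAut_fix_and_sq_eq_conj {y z : G} (hyz : IsConj y z) {α : MulAut G}
    (hfix : α y = y) (hsq : α ^ 2 = MulAut.conj y) :
    ∃ β : MulAut G, β z = z ∧ β ^ 2 = MulAut.conj z := by
  obtain ⟨c, rfl⟩ := isConj_iff.mp hyz
  refine ⟨MulAut.conj c * α * (MulAut.conj c)⁻¹, ?_, ?_⟩
  · simp [hfix, mul_assoc]
  · rw [conj_pow, hsq, ← map_inv, ← map_mul, ← map_mul]

end MulAut

namespace Matrix.SpecialLinearGroup

variable {F : Type*} [Field F]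

lemma coe_transvection_zero_one (b : F) :
    ((transvection zero_ne_one b : SL(2, F)) : Matrix (Fin 2) (Fin 2) F) = !![1, b; 0, 1] := by
  ext i j
  fin_cases i <;> fin_cases j <;> simp [transvection_coe]

lemma transvection_zero_one_injective :
    Function.Injective (transvection zero_ne_one : F → SL(2, F)) := fun a b h => by
  simpa [coe_transvection_zero_one] using congr_arg (fun g : SL(2, F) => g 0 1) h

lemma diag2_mul_transvection (a : F) (ha : a ≠ 0) (b : F) :
    diag2 a ha * transvection zero_ne_one b =
      transvection zero_ne_one (a ^ 2 * b) * diag2 a ha := by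
  ext i j
  fin_cases i <;> fin_cases j <;> simp [diag2_coe', coe_transvection_zero_one]
  field_simp

lemma isConj_transvection_sq_mul (a : F) (ha : a ≠ 0) (b : F) :
    IsConj (transvection zero_ne_one b : SL(2, F)) (transvection zero_ne_one (a ^ 2 * b)) :=
  isConj_iff.mpr ⟨diag2 a ha, by rw [diag2_mul_transvection, mul_inv_cancel_right]⟩

lemma apply_one_zero_eq_zero_of_mul_transvection {s : SL(2, F)} {d e : F} (he : e ≠ 0)
    (h : s * transvection zero_ne_one e = transvection zero_ne_one d * s) : s 1 0 = 0 := by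
  have h11 := congr_arg (fun g : SL(2, F) => g 1 1) h
  simp only [coe_mul, coe_transvection_zero_one, mul_apply, Fin.sum_univ_two] at h11
  simpa [he] using h11

lemma mul_transvection_of_apply_one_zero {s : SL(2, F)} (hs : s 1 0 = 0) (c : F) :
    s * transvection zero_ne_one c = transvection zero_ne_one (s 0 0 ^ 2 * c) * s := by
  have hdet : s 0 0 * s 1 1 = 1 := by
    have h := s.det_coe
    rwa [det_fin_two, hs, mul_zero, sub_zero] at h
  ext i j
  fin_cases i <;> fin_cases j <;> simp [coe_transvection_zero_one, mul_apply, hs]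
  linear_combination (-(s 0 0 * c)) * hdet

lemma map_sq_mul_of_map_transvection {β : MulAut SL(2, F)} {f : F → F}
    (hf : ∀ b, β (transvection zero_ne_one b) = transvection zero_ne_one (f b)) (hf1 : f 1 = 1)
    (a b : F) : f (a ^ 2 * b) = f (a ^ 2) * f b := by
  have hf0 : f 0 = 0 := transvection_zero_one_injective (by
    rw [← hf, transvection_coeff_zero, map_one])
  rcases eq_or_ne a 0 with rfl | ha
  · simp [hf0]
  set s := β (diag2 a ha)
  have hconj (c : F) : s * transvection zero_ne_one (f c) =
      transvection zero_ne_one (f (a ^ 2 * c)) * s := by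
    rw [← hf, ← hf, ← map_mul, ← map_mul, diag2_mul_transvection]
  have hs := apply_one_zero_eq_zero_of_mul_transvection (by rw [hf1]; exact one_ne_zero) (hconj 1)
  have hscale (c : F) : f (a ^ 2 * c) = s 0 0 ^ 2 * f c :=
    transvection_zero_one_injective <| mul_right_cancel <|
      (hconj c).symm.trans (mul_transvection_of_apply_one_zero hs _)
  have hscale_one := hscale 1
  rw [mul_one, hf1, mul_one] at hscale_one
  rw [hscale, hscale_one]

section CharTwo

variable [CharP F 2]

lemma exists_eq_transvection_of_commute {g : SL(2, F)}
    (h : Commute g (transvection zero_ne_one 1)) : ∃ b, g = transvection zero_ne_one b := by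
  have hentry (i j : Fin 2) := congr_arg (fun g : SL(2, F) => g i j) h.eq
  have h10 : g 1 0 = 0 := by simpa [coe_transvection_zero_one, mul_apply] using hentry 1 1
  have h11 : g 1 1 = g 0 0 := by
    have h01 := hentry 0 1
    simp only [coe_mul, coe_transvection_zero_one, mul_apply, Fin.sum_univ_two, of_apply,
      cons_val', cons_val_zero, cons_val_one, empty_val', cons_val_fin_one, one_mul, mul_one] at h01
    linear_combination -h01
  have h00 : g 0 0 = 1 := by
    have h := g.det_coe
    rw [det_fin_two, h10, h11, mul_zero, sub_zero, ← sq] at h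
    exact CharTwo.sq_injective (h.trans (one_pow 2).symm)
  refine ⟨g 0 1, ?_⟩
  ext i j
  fin_cases i <;> fin_cases j <;> simp [coe_transvection_zero_one, h00, h10, h11]

lemma isConj_transvection_one_of_orderOf_eq_two [PerfectRing F 2] {y : SL(2, F)}
    (hy : orderOf y = 2) : IsConj y (transvection zero_ne_one 1) := by
  obtain ⟨hy2, hy1⟩ := orderOf_eq_prime_iff.mp hy
  have hdet : y 0 0 * y 1 1 - y 0 1 * y 1 0 = 1 := by
    have h := y.det_coe
    rwa [det_fin_two] at h
  have e00 := congr_arg (fun g : SL(2, F) => g 0 0) hy2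
  have e10 := congr_arg (fun g : SL(2, F) => g 1 0) hy2
  simp only [sq, coe_mul, coe_one, mul_apply, Fin.sum_univ_two, one_apply_eq,
    one_apply_ne one_ne_zero] at e00 e10
  by_cases hc : y 1 0 = 0
  · have ha : y 0 0 = 1 := CharTwo.sq_injective (by linear_combination e00 - y 0 1 * hc)
    have hd : y 1 1 = 1 := by linear_combination hdet - y 1 1 * ha + y 0 1 * hc
    have hb : y 0 1 ≠ 0 := by
      refine fun hb => hy1 (ext _ _ fun i j => ?_)
      fin_cases i <;> fin_cases j <;> simp [ha, hb, hc, hd]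
    have hyb : y = transvection zero_ne_one (y 0 1) := by
      ext i j
      fin_cases i <;> fin_cases j <;> simp [coe_transvection_zero_one, ha, hc, hd]
    set s := (frobeniusEquiv F 2).symm (y 0 1)
    have hs : s ^ 2 * 1 = y 0 1 := by rw [mul_one]; exact frobeniusEquiv_symm_pow_p F 2 _
    rw [hyb, ← hs]
    exact (isConj_transvection_sq_mul s (fun h0 => hb (by simp [← hs, h0])) 1).symm
  · set s := (frobeniusEquiv F 2).symm (y 1 0)⁻¹
    have hs : s ^ 2 * y 1 0 = 1 := by
      rw [frobeniusEquiv_symm_pow_p F 2, inv_mul_cancel₀ hc]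
    -- the columns of `M` are `(y - 1) e₀` and `e₀`, scaled to determinant one
    let M : SL(2, F) := ⟨!![s * (y 0 0 + 1), s; s * y 1 0, 0], by
      rw [det_fin_two_of]; linear_combination -hs - CharTwo.two_eq_zero (R := F)⟩
    have hM : y * M = M * transvection zero_ne_one 1 := by
      have hMc : (M : Matrix (Fin 2) (Fin 2) F) = !![s * (y 0 0 + 1), s; s * y 1 0, 0] := rfl
      ext i j
      rw [coe_mul, coe_mul, hMc, coe_transvection_zero_one]
      fin_cases i <;> fin_cases j <;>
        simp only [Fin.isValue, Fin.zero_eta, Fin.mk_one, mul_apply, of_apply, cons_val',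
          cons_val_zero, cons_val_one, cons_val_fin_one, Fin.sum_univ_two, mul_one, mul_zero,
          add_zero]
      · linear_combination s * e00
      · linear_combination (-s) * CharTwo.two_eq_zero (R := F)
      · linear_combination s * e10
      · ring
    refine isConj_iff.mpr ⟨M⁻¹, ?_⟩
    rw [inv_inv, mul_assoc, hM, inv_mul_cancel_left]

theorem exists_ringAut_map_transvection [PerfectRing F 2] {β : MulAut SL(2, F)}
    (hfix : β (transvection zero_ne_one 1) = transvection zero_ne_one 1)
    (hsq : β ^ 2 = MulAut.conj (transvection zero_ne_one 1)) :
    ∃ f : RingAut F, f ^ 2 = 1 ∧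
      ∀ b, β (transvection zero_ne_one b) = transvection zero_ne_one (f b) := by
  have hcomm (b : F) :
      Commute (β (transvection zero_ne_one b)) (transvection zero_ne_one 1) := by
    rw [← hfix]
    refine Commute.map ?_ β
    rw [Commute, SemiconjBy, ← transvection_add, ← transvection_add, add_comm]
  choose f hf using fun b => exists_eq_transvection_of_commute (hcomm b)
  have hf1 : f 1 = 1 := transvection_zero_one_injective ((hf 1).symm.trans hfix)
  have hinv (b : F) : f (f b) = b := transvection_zero_one_injective <| by
    rw [← hf, ← hf, ← MulAut.mul_apply, ← sq, hsq, MulAut.conj_apply,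
      mul_inv_eq_iff_eq_mul, ← transvection_add, ← transvection_add, add_comm]
  have hadd (a b : F) : f (a + b) = f a + f b := transvection_zero_one_injective <| by
    rw [← hf, transvection_add, transvection_add, map_mul, hf, hf]
  have hmul (a b : F) : f (a * b) = f a * f b := by
    rw [← frobeniusEquiv_symm_pow_p F 2 a]
    exact map_sq_mul_of_map_transvection hf hf1 _ b
  exact ⟨⟨⟨f, f, hinv, hinv⟩, hmul, hadd⟩, RingEquiv.ext hinv, hf⟩

lemma not_forall_map_transvection_eq_self {β : MulAut SL(2, F)}
    (hsq : β ^ 2 = MulAut.conj (transvection zero_ne_one 1)) {a : F} (ha : a ≠ 0)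
    (ha1 : a ^ 2 ≠ 1) : ¬ ∀ b, β (transvection zero_ne_one b) = transvection zero_ne_one b := by
  intro hid
  have ht := diag2_mul_transvection a ha
  set t := diag2 a ha
  have hβt : β t * transvection zero_ne_one 1 = transvection zero_ne_one (a ^ 2 * 1) * β t := by
    simpa only [map_mul, hid] using congr_arg β (ht 1)
  have hcomm : Commute (t⁻¹ * β t) (transvection zero_ne_one 1) := by
    have ht' : t⁻¹ * transvection zero_ne_one (a ^ 2 * 1) = transvection zero_ne_one 1 * t⁻¹ := by
      rw [inv_mul_eq_iff_eq_mul, ← mul_assoc, ht, mul_inv_cancel_right]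
    rw [Commute, SemiconjBy, mul_assoc, hβt, ← mul_assoc, ht', mul_assoc]
  obtain ⟨c, hc⟩ := exists_eq_transvection_of_commute hcomm
  have hs : β t = t * transvection zero_ne_one c := by rw [← hc, mul_inv_cancel_left]
  have hββt : β (β t) = t := by
    rw [hs, map_mul, hs, hid, mul_assoc, ← transvection_add, CharTwo.add_self_eq_zero,
      transvection_coeff_zero, mul_one]
  rw [← MulAut.mul_apply, ← sq, hsq, MulAut.conj_apply, mul_inv_eq_iff_eq_mul, ht] at hββt
  exact ha1 (by
    simpa only [mul_one] using (transvection_zero_one_injective (mul_right_cancel hββt)).symm)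

theorem not_exists_mulAut_fix_and_sq_eq_conj [PerfectRing F 2] [Nontrivial Fˣ]
    (hF : ∀ f : RingAut F, f ^ 2 = 1 → f = 1) {y : SL(2, F)} (hy : orderOf y = 2) :
    ¬ ∃ α : MulAut SL(2, F), α y = y ∧ α ^ 2 = MulAut.conj y := by
  rintro ⟨α, hfix, hsq⟩
  obtain ⟨β, hβfix, hβsq⟩ :=
    (isConj_transvection_one_of_orderOf_eq_two hy).exists_mulAut_fix_and_sq_eq_conj hfix hsq
  obtain ⟨f, hf2, hf⟩ := exists_ringAut_map_transvection hβfix hβsq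
  obtain ⟨a, ha⟩ := exists_ne (1 : Fˣ)
  refine not_forall_map_transvection_eq_self hβsq a.ne_zero ?_ (by simpa [hF f hf2] using hf)
  rwa [← one_pow 2, Ne, CharTwo.sq_inj, Units.val_eq_one]

end CharTwo

end Matrix.SpecialLinearGroup

lemma GaloisField.eq_one_of_sq_eq_one {p n : ℕ} [Fact p.Prime] (hn : Odd n)
    {f : RingAut (GaloisField p n)} (hf : f ^ 2 = 1) : f = 1 := by
  let g : GaloisField p n ≃ₐ[ZMod p] GaloisField p n := AlgEquiv.ofRingEquiv (f := f)
    fun x => RingHom.congr_fun (RingHom.ext_zmod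
      ((f : GaloisField p n →+* GaloisField p n).comp (algebraMap (ZMod p) _))
      (algebraMap (ZMod p) _)) x
  have hg : g ^ 2 = 1 := AlgEquiv.ext fun x => RingEquiv.congr_fun hf x
  have hcard : Nat.card Gal(GaloisField p n / ZMod p) = n :=
    (IsGalois.card_aut_eq_finrank _ _).trans (GaloisField.finrank p hn.pos.ne')
  have hdvd := orderOf_dvd_natCard g
  rw [hcard] at hdvd
  have hord : orderOf g = 1 := Nat.Coprime.eq_one_of_dvd
    ((Nat.coprime_two_left.mpr hn).coprime_dvd_left (orderOf_dvd_of_pow_eq_one hg)) hdvd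
  exact RingEquiv.ext fun x => AlgEquiv.ext_iff.mp (orderOf_eq_one_iff.mp hord) x

theorem sl28_727_not_self_dual_general (x y : SL28)
    (hgen : Subgroup.closure ({x, y} : Set SL28) = ⊤)
    (hy : orderOf y = 2) :
    ¬ ∃ α : SL28 ≃* SL28, α x = (x * y)⁻¹ ∧ α y = y := by
  rintro ⟨α, hαx, hαy⟩
  have : Nontrivial (GaloisField 2 3)ˣ := Finite.one_lt_card_iff_nontrivial.mp (by
    rw [Nat.card_units, GaloisField.card 2 3 (by norm_num)]; norm_num)
  refine not_exists_mulAut_fix_and_sq_eq_conj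
    (fun _ => GaloisField.eq_one_of_sq_eq_one (by decide)) hy ⟨α, hαy, ?_⟩
  rw [MulAut.sq_eq_conj_inv_of_closure_pair_eq_top hgen hαx hαy,
    inv_eq_of_mul_eq_one_right (by rw [← sq]; exact (orderOf_eq_prime_iff.mp hy).1)]

/-- No generating pair of type `(7,2,7)` in `SL(2,8)` corresponds to a self-dual map:
no automorphism sends `x ↦ (x*y)⁻¹`, `y ↦ y`. -/
theorem sl28_727_not_self_dual (x y : SL28)
    (hgen : Subgroup.closure ({x, y} : Set SL28) = ⊤)
    (hx : orderOf x = 7) (hy : orderOf y = 2) (hxy : orderOf (x * y) = 7) :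
    ¬ ∃ α : SL28 ≃* SL28, α x = (x * y)⁻¹ ∧ α y = y :=
  sl28_727_not_self_dual_general x y hgen hy
end

section
/- If x, y are elements of G = SL(2,𝔽₈) with orderOf x = 7, orderOf y = 2, orderOf (x*y) = 7, and x is conjugate in G to (x*y)⁻¹, then the subgroup generated by {x,y} is a proper subgroup of G (such triples lie inside the normalizer of a Sylow 2-subgroup and do not generate G). -/
open Matrix

/-!
In characteristic 2 an element of `SL(2, K)` is an involution iff its trace is `0`. As `x` is
conjugate to `(x y)⁻¹`, `tr (x y) = tr x`, and the Cayley–Hamilton recurrence propagates this to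
`tr (x ^ m y) = tr (x ^ m)` for all `m`. Then every commutator `⁅y, x ^ m⁆` has trace `0`, so it is
an involution, which means that the conjugates `x ^ k y x ^ (-k)` commute pairwise. They generate
an elementary abelian 2-subgroup `V` normalized by `x`, of order at most `8` (the 2-part of
`|SL(2, 8)| = 504`), and `⟨x, y⟩ ≤ ⟨x⟩ V` has order at most `7 · 8 < 504`.
-/

open scoped MatrixGroups commutatorElement Pointwise

namespace Matrix.SpecialLinearGroup

section CommRing

variable {R : Type*} [CommRing R]

local notation:1024 "↑ₘ" A:1024 => ((A : SL(2, R)) : Matrix (Fin 2) (Fin 2) R)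

theorem coe_mul_self_eq (A : SL(2, R)) : ↑ₘA * ↑ₘA = trace ↑ₘA • ↑ₘA - 1 := by
  have hdet := A.prop
  rw [det_fin_two] at hdet
  ext i j
  fin_cases i <;> fin_cases j <;>
    simp [mul_apply, trace_fin_two]
  · linear_combination -hdet
  · ring
  · ring
  · linear_combination -hdet

theorem coe_inv_eq_trace_smul_sub (A : SL(2, R)) : ↑ₘA⁻¹ = trace ↑ₘA • 1 - ↑ₘA := by
  rw [coe_inv, adjugate_fin_two]
  ext i j
  fin_cases i <;> fin_cases j <;> simp [trace_fin_two]

theorem trace_inv (A : SL(2, R)) : trace ↑ₘA⁻¹ = trace ↑ₘA := by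
  rw [coe_inv_eq_trace_smul_sub, trace_sub, trace_smul, trace_one, Fintype.card_fin,
    smul_eq_mul]
  ring

theorem trace_pow_add_two_mul (A B : SL(2, R)) (m : ℕ) :
    trace ↑ₘ(A ^ (m + 2) * B) = trace ↑ₘA * trace ↑ₘ(A ^ (m + 1) * B) - trace ↑ₘ(A ^ m * B) := by
  have h : ↑ₘ(A ^ (m + 2) * B) = trace ↑ₘA • ↑ₘ(A ^ (m + 1) * B) - ↑ₘ(A ^ m * B) := by
    simp only [coe_mul, coe_pow, pow_succ]
    rw [mul_assoc (↑ₘA ^ m), coe_mul_self_eq, mul_sub, sub_mul, mul_one, mul_smul_comm,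
      smul_mul_assoc]
  rw [h, trace_sub, trace_smul, smul_eq_mul]

/-- Both sides satisfy the recurrence `t (m + 2) = tr A * t (m + 1) - t m`. -/
theorem trace_pow_mul_eq_trace_pow {A B : SL(2, R)} (h₀ : trace ↑ₘB = 2)
    (h₁ : trace ↑ₘ(A * B) = trace ↑ₘA) (m : ℕ) : trace ↑ₘ(A ^ m * B) = trace ↑ₘ(A ^ m) := by
  induction m using Nat.strong_induction_on with
  | _ m ih =>
    match m, ih with
    | 0, _ => simp [h₀]
    | 1, _ => simpa using h₁
    | m + 2, ih =>
      have h := trace_pow_add_two_mul A 1 m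
      simp only [mul_one] at h
      rw [trace_pow_add_two_mul, h, ih m (by omega), ih (m + 1) (by omega)]

theorem sq_card_le_card [Finite R] : Nat.card R ^ 2 ≤ Nat.card SL(2, R) := by
  let f : R × R → SL(2, R) := fun p =>
    ⟨!![1, p.1; p.2, p.2 * p.1 + 1], by rw [det_fin_two_of]; ring⟩
  have hf : Function.Injective f := by
    rintro ⟨b, c⟩ ⟨b', c'⟩ h
    have h01 := congrArg (fun A : SL(2, R) => A 0 1) h
    have h10 := congrArg (fun A : SL(2, R) => A 1 0) h
    simp_all [f]
  simpa [sq] using Nat.card_le_card_of_injective f hf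

end CommRing

theorem trace_eq_of_isConj {n R : Type*} [Fintype n] [DecidableEq n] [CommRing R]
    {A B : SpecialLinearGroup n R} (h : IsConj A B) :
    trace (B : Matrix n n R) = trace (A : Matrix n n R) := by
  obtain ⟨C, rfl⟩ := isConj_iff.mp h
  rw [coe_mul, coe_mul, trace_mul_comm, ← coe_mul, ← coe_mul, inv_mul_cancel_left]

section CharTwo

variable {K : Type*} [Field K] [CharP K 2]

local notation:1024 "↑ₘ" A:1024 => ((A : SL(2, K)) : Matrix (Fin 2) (Fin 2) K)

theorem mul_self_eq_one_iff_trace_eq_zero (A : SL(2, K)) : A * A = 1 ↔ trace ↑ₘA = 0 := by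
  have hA : ↑ₘA ≠ 0 := fun h => by simpa [h] using A.prop
  rw [SpecialLinearGroup.ext_iff, Matrix.ext_iff, coe_mul, coe_one, coe_mul_self_eq,
    sub_eq_iff_eq_add, CharTwo.add_self_eq_zero, smul_eq_zero, or_iff_left hA]

/-- By Fricke's identity `tr ⁅B, A⁆ = tr² A + tr² B + tr² (AB) - tr A tr B tr (AB) - 2`, here
`tr ⁅B, A⁆ = 2 = 0`. -/
theorem commutator_mul_self_eq_one {A B : SL(2, K)} (hB : B * B = 1)
    (h : trace ↑ₘ(A * B) = trace ↑ₘA) : ⁅B, A⁆ * ⁅B, A⁆ = 1 := by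
  have hBinv : B⁻¹ = B := inv_eq_of_mul_eq_one_right hB
  have hconj : trace ↑ₘ(B * A * B⁻¹) = trace ↑ₘA :=
    trace_eq_of_isConj (isConj_iff.mpr ⟨B, rfl⟩)
  have hsq : trace ↑ₘ(B * A * B⁻¹ * A) = trace ↑ₘA * trace ↑ₘA - 2 := by
    rw [hBinv, show B * A * B * A = (B * A) * (B * A) by group, coe_mul (B * A),
      coe_mul_self_eq, trace_sub, trace_smul, trace_one, coe_mul, trace_mul_comm, ← coe_mul, h]
    simp
  rw [mul_self_eq_one_iff_trace_eq_zero]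
  calc trace ↑ₘ⁅B, A⁆
      = trace ↑ₘ(B * A * B⁻¹) * trace ↑ₘA - trace ↑ₘ(B * A * B⁻¹ * A) := by
        rw [commutatorElement_def, coe_mul (B * A * B⁻¹) A⁻¹, coe_inv_eq_trace_smul_sub,
          mul_sub, mul_smul_comm, mul_one, trace_sub, trace_smul, smul_eq_mul, ← coe_mul, mul_comm]
    _ = 2 := by rw [hconj, hsq]; ring
    _ = 0 := CharTwo.two_eq_zero

end CharTwo

end Matrix.SpecialLinearGroup

section Group

variable {G : Type*} [Group G]

theorem commute_of_mul_self_eq_one {a b : G} (ha : a * a = 1) (hb : b * b = 1)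
    (hab : a * b * (a * b) = 1) : Commute a b :=
  calc a * b = (a * b)⁻¹ := (inv_eq_of_mul_eq_one_right hab).symm
    _ = b * a := by
      rw [_root_.mul_inv_rev, inv_eq_of_mul_eq_one_right ha, inv_eq_of_mul_eq_one_right hb]

theorem conj_mul_self_eq_one {y : G} (hy : y * y = 1) (g : G) :
    g * y * g⁻¹ * (g * y * g⁻¹) = 1 := by
  rw [show g * y * g⁻¹ * (g * y * g⁻¹) = g * (y * y) * g⁻¹ by group, hy]
  group

namespace Subgroup

def conjZPowersClosure (x y : G) : Subgroup G :=
  closure (Set.range fun k : ℤ => x ^ k * y * (x ^ k)⁻¹)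

theorem mem_conjZPowersClosure_self (x y : G) : y ∈ conjZPowersClosure x y :=
  subset_closure ⟨0, by simp⟩

theorem mem_normalizer_conjZPowersClosure (x y : G) :
    x ∈ normalizer (conjZPowersClosure x y : Set G) := by
  rw [mem_normalizer_iff_map_conj_eq, conjZPowersClosure, MonoidHom.map_closure]
  congr 1
  ext g
  simp only [Set.mem_image, Set.mem_range, exists_exists_eq_and, MonoidHom.coe_coe,
    MulAut.conj_apply]
  constructor
  · rintro ⟨k, rfl⟩
    exact ⟨k + 1, by group⟩
  · rintro ⟨k, rfl⟩
    exact ⟨k - 1, by group⟩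

theorem closure_pair_le_zpowers_sup_conjZPowersClosure (x y : G) :
    closure {x, y} ≤ zpowers x ⊔ conjZPowersClosure x y := by
  rw [closure_le, Set.insert_subset_iff, Set.singleton_subset_iff]
  exact ⟨le_sup_left (α := Subgroup G) (mem_zpowers x),
    le_sup_right (α := Subgroup G) (mem_conjZPowersClosure_self x y)⟩

theorem card_sup_le_of_le_normalizer (H N : Subgroup G) (h : H ≤ normalizer (N : Set G)) :
    Nat.card ↥(H ⊔ N) ≤ Nat.card H * Nat.card N := by
  have hcoe := coe_mul_of_left_le_normalizer_right H N h
  calc Nat.card ↥(H ⊔ N) = Nat.card ↥((H : Set G) * (N : Set G)) := by rw [← hcoe]; rfl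
    _ ≤ Nat.card H * Nat.card N := Set.natCard_mul_le

theorem commute_conj_of_commutator_mul_self_eq_one {x y : G} (hy : y * y = 1)
    (h : ∀ m : ℕ, ⁅y, x ^ m⁆ * ⁅y, x ^ m⁆ = 1) (j k : ℤ) :
    Commute (x ^ j * y * (x ^ j)⁻¹) (x ^ k * y * (x ^ k)⁻¹) := by
  wlog hjk : j ≤ k generalizing j k
  · exact (this k j (le_of_not_ge hjk)).symm
  obtain ⟨m, rfl⟩ := Int.le.dest hjk
  refine commute_of_mul_self_eq_one (conj_mul_self_eq_one hy _) (conj_mul_self_eq_one hy _) ?_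
  have hyinv : y⁻¹ = y := inv_eq_of_mul_eq_one_right hy
  have hm := h m
  rw [commutatorElement_def, hyinv] at hm
  calc x ^ j * y * (x ^ j)⁻¹ * (x ^ (j + m) * y * (x ^ (j + m))⁻¹) *
        (x ^ j * y * (x ^ j)⁻¹ * (x ^ (j + m) * y * (x ^ (j + m))⁻¹))
      = x ^ j * (y * x ^ m * y * (x ^ m)⁻¹ * (y * x ^ m * y * (x ^ m)⁻¹)) * (x ^ j)⁻¹ := by
        simp only [_root_.zpow_add, zpow_natCast]
        group
    _ = 1 := by rw [hm]; group

theorem isPGroup_two_conjZPowersClosure {x y : G} (hy : y * y = 1)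
    (hcomm : ∀ j k : ℤ, Commute (x ^ j * y * (x ^ j)⁻¹) (x ^ k * y * (x ^ k)⁻¹)) :
    IsPGroup 2 (conjZPowersClosure x y) := by
  set S := Set.range fun k : ℤ => x ^ k * y * (x ^ k)⁻¹
  have hS : ∀ a ∈ S, ∀ b ∈ S, a * b = b * a := by
    rintro _ ⟨j, rfl⟩ _ ⟨k, rfl⟩
    exact hcomm j k
  have hsq : ∀ g ∈ closure S, g * g = 1 := by
    intro g hg
    induction hg using closure_induction with
    | mem g hg =>
      obtain ⟨k, rfl⟩ := hg
      exact conj_mul_self_eq_one hy _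
    | one => exact mul_one 1
    | mul a b ha hb pa pb =>
      have hab : Commute b a := Set.centralizer_centralizer_comm_of_comm hS b
        (closure_le_centralizer_centralizer S hb) a (closure_le_centralizer_centralizer S ha)
      rw [hab.mul_mul_mul_comm, pa, pb, one_mul]
    | inv a _ pa => rw [← _root_.mul_inv_rev, pa, inv_one]
  exact fun g => ⟨1, Subtype.ext (by simpa [pow_two] using hsq g g.2)⟩

end Subgroup

end Group

theorem card_SL28_dvd : Nat.card SL28 ∣ 3528 := by
  have : Fintype (GaloisField 2 3) := Fintype.ofFinite _
  have hcard : Fintype.card (GaloisField 2 3) = 8 := by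
    rw [← Nat.card_eq_fintype_card, GaloisField.card 2 3 (by norm_num)]; norm_num
  have hGL : Nat.card (GL (Fin 2) (GaloisField 2 3)) = 3528 := by
    simp [card_GL_field, hcard, Fin.prod_univ_two]
  exact hGL ▸ Subgroup.card_dvd_of_injective _ SpecialLinearGroup.toGL_injective

theorem card_le_eight_of_isPGroup_two {V : Subgroup SL28} (hV : IsPGroup 2 V) :
    Nat.card V ≤ 8 := by
  obtain ⟨n, hn⟩ := IsPGroup.iff_card.mp hV
  have hdvd : 2 ^ n ∣ 8 * 441 := hn ▸ (Subgroup.card_subgroup_dvd_card V).trans card_SL28_dvd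
  have hcop : Nat.Coprime (2 ^ n) 441 := Nat.Coprime.pow_left n (by norm_num)
  exact hn ▸ Nat.le_of_dvd (by norm_num) (hcop.dvd_of_dvd_mul_right hdvd)

open Subgroup SpecialLinearGroup

theorem sl28_727_conjugate_not_generating_general (x y : SL28)
    (hx : orderOf x = 7) (hy : orderOf y = 2)
    (hconj : IsConj x (x * y)⁻¹) :
    Subgroup.closure ({x, y} : Set SL28) ≠ ⊤ := by
  have hy2 : y * y = 1 := by simpa [hy, pow_two] using pow_orderOf_eq_one y
  have htr : trace (x * y : SL28).1 = trace x.1 :=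
    (trace_inv _).symm.trans (trace_eq_of_isConj hconj)
  have hty : trace y.1 = 2 := by
    rw [(mul_self_eq_one_iff_trace_eq_zero y).mp hy2]
    exact CharTwo.two_eq_zero.symm
  have hV : IsPGroup 2 (conjZPowersClosure x y) :=
    isPGroup_two_conjZPowersClosure hy2 <| commute_conj_of_commutator_mul_self_eq_one hy2
      fun m => commutator_mul_self_eq_one hy2 (trace_pow_mul_eq_trace_pow hty htr m)
  intro htop
  have hcard : Nat.card SL28 ≤ 7 * 8 :=
    calc Nat.card SL28 = Nat.card (closure ({x, y} : Set SL28)) := by rw [htop, card_top]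
      _ ≤ Nat.card ↥(zpowers x ⊔ conjZPowersClosure x y) :=
        card_le_of_le (closure_pair_le_zpowers_sup_conjZPowersClosure x y)
      _ ≤ Nat.card (zpowers x) * Nat.card (conjZPowersClosure x y) :=
        card_sup_le_of_le_normalizer _ _ (zpowers_le.mpr (mem_normalizer_conjZPowersClosure x y))
      _ ≤ 7 * 8 := by
        rw [Nat.card_zpowers, hx]
        exact Nat.mul_le_mul_left 7 (card_le_eight_of_isPGroup_two hV)
  have h64 : Nat.card (GaloisField 2 3) ^ 2 ≤ Nat.card SL28 := sq_card_le_card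
  rw [GaloisField.card 2 3 (by norm_num)] at h64
  omega

/-- In `SL(2,8)`, a pair of type `(7,2,7)` with `x` conjugate to `(x*y)⁻¹`
generates a proper subgroup. -/
theorem sl28_727_conjugate_not_generating (x y : SL28)
    (hx : orderOf x = 7) (hy : orderOf y = 2) (hxy : orderOf (x * y) = 7)
    (hconj : IsConj x (x * y)⁻¹) :
    Subgroup.closure ({x, y} : Set SL28) ≠ ⊤ :=
  sl28_727_conjugate_not_generating_general x y hx hy hconj
end

section
/- For every n ≥ 5 and every permutation y in the symmetric group Sₙ = Equiv.Perm (Fin n) with y ≠ 1 and y² = 1, there exists a permutation x such that the subgroup generated by {x, y} is all of Sₙ. (Every involution in Sₙ, n ≥ 5, is a member of a generating pair.) -/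
/-!
If `y` is a transposition `(a b)`, any `n`-cycle sending `a` to `b` completes it to a generating
pair. Otherwise `y = (a b)(c d)⋯`; pick a fifth point `e` (this is where `n ≥ 5` enters) and a
cycle `C` of odd length avoiding `b` and `c`: on `{b, c}ᶜ` with `C a = d` if `n` is odd, on
`{a, b, c}ᶜ` if `n` is even. For `x = (b c) C y` we get `x y = (b c) C`, whose `(ord C)`-th power
is `(b c)`; hence `(b c)`, `C` and `y (b c) y = (a d)` lie in `⟨x, y⟩`. Moving `(a d)` along `C`
yields every `(a v)` with `v ∉ {a, b, c}`; conjugating `(a e)` by `y` gives `(b, y e)`, whence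
`(a b)` and `(a c)`, and the transpositions `(a v)` generate `Sₙ`.
-/

open Equiv Finset

theorem Commute.mul_pow_orderOf_eq_of_odd {G : Type*} [Monoid G] {t c : G} (h : Commute t c)
    (ht : t ^ 2 = 1) (hc : Odd (orderOf c)) : (t * c) ^ orderOf c = t := by
  obtain ⟨k, hk⟩ := hc
  rw [h.mul_pow, pow_orderOf_eq_one, mul_one, hk, pow_succ, pow_mul, ht, one_pow, one_mul]

theorem Subgroup.mem_and_mem_of_mul_mem_of_odd_orderOf {G : Type*} [Group G] {H : Subgroup G}
    {t c : G} (h : Commute t c) (ht : t ^ 2 = 1) (hc : Odd (orderOf c)) (htc : t * c ∈ H) :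
    t ∈ H ∧ c ∈ H := by
  have htH : t ∈ H := h.mul_pow_orderOf_eq_of_odd ht hc ▸ H.pow_mem htc _
  exact ⟨htH, by simpa using H.mul_mem (H.inv_mem htH) htc⟩

namespace Equiv.Perm

variable {α : Type*}

theorem apply_apply_of_sq_eq_one {y : Perm α} (hy : y ^ 2 = 1) (t : α) : y (y t) = t := by
  rw [← mul_apply, ← sq, hy, one_apply]

variable [DecidableEq α]

theorem swap_apply_apply_mem {H : Subgroup (Perm α)} {f : Perm α} {x y : α} (hf : f ∈ H)
    (h : swap x y ∈ H) : swap (f x) (f y) ∈ H := by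
  rw [swap_apply_apply]
  exact H.mul_mem (H.mul_mem hf h) (H.inv_mem hf)

theorem swap_pow_apply_mem {H : Subgroup (Perm α)} {C : Perm α} {a d : α} (hC : C ∈ H)
    (had : swap a d ∈ H) (hCa : C a = a ∨ C a = d) (j : ℕ) : swap a ((C ^ j) d) ∈ H := by
  rcases hCa with hCa | hCa
  · simpa [pow_apply_eq_self_of_apply_eq_self hCa] using
      swap_apply_apply_mem (H.pow_mem hC j) had
  · induction j with
    | zero => exact had
    | succ j ih =>
      refine SubmonoidClass.swap_mem_trans H ih ?_
      have h := swap_apply_apply_mem (H.pow_mem hC (j + 1)) had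
      rwa [pow_succ, mul_apply, hCa] at h

theorem eq_top_of_forall_swap_mem [Finite α] {H : Subgroup (Perm α)} (a : α)
    (h : ∀ v, swap a v ∈ H) : H = ⊤ := by
  rw [eq_top_iff, ← closure_isSwap, Subgroup.closure_le]
  rintro _ ⟨u, v, -, rfl⟩
  exact SubmonoidClass.swap_mem_trans H (swap_comm u a ▸ h u) (h v)

theorem eq_top_of_forall_swap_mem_compl [Finite α] {H : Subgroup (Perm α)} {y : Perm α}
    (hy : y ∈ H) {a c e : α} (hbc : swap (y a) c ∈ H)
    (hstar : ∀ v ∉ ({a, y a, c} : Finset α), swap a v ∈ H)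
    (he : e ∉ ({a, y a, c} : Finset α)) (hye : y e ∉ ({a, y a, c} : Finset α)) : H = ⊤ := by
  have hab : swap a (y a) ∈ H :=
    SubmonoidClass.swap_mem_trans H (hstar _ hye)
      (swap_comm (y a) (y e) ▸ swap_apply_apply_mem hy (hstar e he))
  have hac : swap a c ∈ H := SubmonoidClass.swap_mem_trans H hab hbc
  refine eq_top_of_forall_swap_mem a fun v => ?_
  by_cases hv : v ∈ ({a, y a, c} : Finset α)
  · simp only [Finset.mem_insert, Finset.mem_singleton] at hv
    rcases hv with rfl | rfl | rfl
    · exact (swap_self v).symm ▸ H.one_mem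
    · exact hab
    · exact hac
  · exact hstar v hv

variable [Fintype α]

theorem exists_isCycle_support_eq_apply_eq {s : Finset α} {a d : α} (ha : a ∈ s) (hd : d ∈ s)
    (had : a ≠ d) : ∃ C : Perm α, C.IsCycle ∧ C.support = s ∧ C a = d := by
  set l := a :: d :: ((s.erase a).erase d).toList
  have hl : l.Nodup := by simp [l, had, Finset.nodup_toList]
  refine ⟨l.formPerm, List.isCycle_formPerm hl (by simp [l]), ?_,
    List.formPerm_apply_head _ _ _ hl⟩
  rw [List.support_formPerm_of_nodup _ hl (by simp [l])]
  ext v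
  by_cases hva : v = a <;> by_cases hvd : v = d <;> simp_all [l]

theorem exists_apply_ne_of_not_isSwap {y : Perm α} (hy : y ≠ 1) (hswap : ¬y.IsSwap) :
    ∃ a c, y a ≠ a ∧ y c ≠ c ∧ c ∉ ({a, y a} : Finset α) := by
  have h3 : 3 ≤ #y.support := by
    have h0 : #y.support ≠ 0 := by simpa using hy
    have h2 : #y.support ≠ 2 := fun h => hswap (card_support_eq_two.1 h)
    have h1 := y.card_support_ne_one
    omega
  obtain ⟨a, ha⟩ := card_pos.1 (by omega : 0 < #y.support)
  obtain ⟨c, hc, hca⟩ := exists_mem_notMem_of_card_lt_card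
    ((card_le_two : #({a, y a} : Finset α) ≤ 2).trans_lt h3)
  exact ⟨a, c, mem_support.1 ha, mem_support.1 hc, hca⟩

theorem exists_closure_pair_swap_eq_top {a b : α} (hab : a ≠ b) :
    ∃ x : Perm α, Subgroup.closure {x, swap a b} = ⊤ := by
  obtain ⟨x, hx, hsupp, hxa⟩ := exists_isCycle_support_eq_apply_eq (mem_univ a) (mem_univ b) hab
  exact ⟨x, hxa ▸ closure_cycle_adjacent_swap hx hsupp a⟩

theorem closure_swap_mul_mul_eq_top {y C : Perm α} {a c e : α} (hy : y ^ 2 = 1)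
    (hd : y c ∉ ({a, y a, c} : Finset α)) (he : e ∉ ({a, y a, c, y c} : Finset α))
    (hC : C.IsCycle) (hCodd : Odd #C.support) (hCsupp : C.support ⊆ {y a, c}ᶜ)
    (hCsupp' : ({a, y a, c} : Finset α)ᶜ ⊆ C.support) (hCa : C a = a ∨ C a = y c) :
    Subgroup.closure ({swap (y a) c * C * y, y} : Set (Perm α)) = ⊤ := by
  set H := Subgroup.closure ({swap (y a) c * C * y, y} : Set (Perm α))
  have hyy := apply_apply_of_sq_eq_one hy
  have hxH : swap (y a) c * C * y ∈ H := Subgroup.subset_closure (Set.mem_insert _ _)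
  have hyH : y ∈ H := Subgroup.subset_closure (Set.mem_insert_of_mem _ rfl)
  have hτC : swap (y a) c * C ∈ H := by simpa [mul_assoc, ← sq, hy] using H.mul_mem hxH hyH
  have hdisj : Disjoint (swap (y a) c) C := fun t => by
    by_cases ht : t ∈ C.support
    · have := hCsupp ht
      simp only [mem_compl, mem_insert, mem_singleton, not_or] at this
      exact .inl (swap_apply_of_ne_of_ne this.1 this.2)
    · exact .inr (notMem_support.1 ht)
  obtain ⟨hτ, hCH⟩ := Subgroup.mem_and_mem_of_mul_mem_of_odd_orderOf hdisj.commute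
    (by rw [sq, swap_mul_self]) (hC.orderOf ▸ hCodd) hτC
  have had : swap a (y c) ∈ H := by simpa [hyy] using swap_apply_apply_mem hyH hτ
  have hstar (v : α) (hv : v ∉ ({a, y a, c} : Finset α)) : swap a v ∈ H := by
    have hsame := hC.sameCycle (mem_support.1 (hCsupp' (mem_compl.2 hd)))
      (mem_support.1 (hCsupp' (mem_compl.2 hv)))
    obtain ⟨j, rfl⟩ := hsame.exists_nat_pow_eq
    exact swap_pow_apply_mem hCH had hCa j
  exact eq_top_of_forall_swap_mem_compl (e := e) hyH hτ hstar (by grind) (by grind)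

theorem exists_closure_pair_eq_top_of_apply_ne (hcard : 5 ≤ Fintype.card α) {y : Perm α}
    (hy : y ^ 2 = 1) {a c : α} (ha : y a ≠ a) (hc : y c ≠ c)
    (hca : c ∉ ({a, y a} : Finset α)) :
    ∃ x : Perm α, Subgroup.closure ({x, y} : Set (Perm α)) = ⊤ := by
  have hyy := apply_apply_of_sq_eq_one hy
  have hd : y c ∉ ({a, y a, c} : Finset α) := by grind
  obtain ⟨e, -, he⟩ := exists_mem_notMem_of_card_lt_card
    ((card_le_four : #({a, y a, c, y c} : Finset α) ≤ 4).trans_lt (hcard.trans_lt' (by simp)))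
  have hab : a ∉ ({y a, c} : Finset α) := by grind
  have hbc : y a ≠ c := by grind
  rcases Nat.even_or_odd (Fintype.card α) with hpar | hpar
  · obtain ⟨C, hC, hsupp, -⟩ := exists_isCycle_support_eq_apply_eq (s := {a, y a, c}ᶜ)
      (a := y c) (d := e) (mem_compl.2 hd) (by grind [mem_compl]) (by grind)
    have hodd : Odd #C.support := by
      rw [hsupp, card_compl, card_insert_of_notMem hab, card_pair hbc]
      exact Nat.Even.sub_odd (by omega) hpar (by decide)
    refine ⟨_, closure_swap_mul_mul_eq_top hy hd he hC hodd
      (hsupp ▸ compl_subset_compl.2 (subset_insert _ _)) hsupp.ge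
      (.inl (notMem_support.1 (by simp [hsupp])))⟩
  · obtain ⟨C, hC, hsupp, hCa⟩ := exists_isCycle_support_eq_apply_eq (s := {y a, c}ᶜ)
      (a := a) (d := y c) (mem_compl.2 hab) (by grind [mem_compl]) (by grind)
    have hodd : Odd #C.support := by
      rw [hsupp, card_compl, card_pair hbc]
      exact Nat.Odd.sub_even (by omega) hpar (by decide)
    exact ⟨_, closure_swap_mul_mul_eq_top hy hd he hC hodd hsupp.le
      (hsupp ▸ compl_subset_compl.2 (subset_insert _ _)) (.inr hCa)⟩

end Equiv.Perm

/-- Every involution in `Sₙ`, `n ≥ 5`, is a member of a generating pair. -/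
theorem symmetricGroup_involution_useful (n : ℕ) (hn : 5 ≤ n)
    (y : Equiv.Perm (Fin n)) (hy1 : y ≠ 1) (hy2 : y ^ 2 = 1) :
    ∃ x : Equiv.Perm (Fin n),
      Subgroup.closure ({x, y} : Set (Equiv.Perm (Fin n))) = ⊤ := by
  by_cases hswap : y.IsSwap
  · obtain ⟨a, b, hab, rfl⟩ := hswap
    exact Perm.exists_closure_pair_swap_eq_top hab
  · obtain ⟨a, c, ha, hc, hca⟩ := Perm.exists_apply_ne_of_not_isSwap hy1 hswap
    exact Perm.exists_closure_pair_eq_top_of_apply_ne (by simpa using hn) hy2 ha hc hca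
end

section
/- Let e ≥ 2, q = 2^e, F = GaloisField 2 e, and let G be the one-dimensional affine group AGL₁(q), realized as the group of affine self-equivalences F ≃ᵃ[F] F (the transformations t ↦ a·t + b with a ∈ Fˣ, b ∈ F). Then every generating pair (x,y) of G with orderOf y = 2 satisfies orderOf x = q − 1, orderOf (x*y) = q − 1, and the commutator x⁻¹ * y⁻¹ * x * y has order 2. (All maps in O(AGL₁(2^e)) have type {q−1, q−1} and Petrie length 4.) -/
/-!
Every `f ∈ AGL₁(F)` acts as `t ↦ a t + b`, and `f ↦ a` is a surjective homomorphism onto `Fˣ`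
whose kernel is the translations. In characteristic `2` an involution has `a² = 1`, hence
`a = 1`, so the involution `y` is a translation and the linear part of `x` alone generates the
cyclic group `Fˣ`, of order `q - 1`. An affine map with `a ≠ 1` has a fixed point, so its order
is that of `a`; this gives the orders of `x` and `x * y`, which have the same linear part. The
commutator is a translation, hence of order at most `2`, and it is nontrivial because a
nontrivial translation commutes only with translations.
-/

namespace AffineEquiv

variable {F : Type*} [Field F]

theorem linear_apply_eq_mul (f : F ≃ᵃ[F] F) (t : F) : f.linear t = t * f.linear 1 := by
  simpa using f.linear.map_smul t 1

noncomputable def linearCoeff : (F ≃ᵃ[F] F) →* Fˣ where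
  toFun f := Units.mk0 (f.linear 1) (by simp)
  map_one' := by ext; simp [one_def]
  map_mul' f g := by
    ext
    change f.linear (g.linear 1) = _
    rw [linear_apply_eq_mul f, mul_comm]
    rfl

@[simp]
theorem coe_linearCoeff (f : F ≃ᵃ[F] F) : (linearCoeff f : F) = f.linear 1 := rfl

theorem apply_eq_linearCoeff_mul_add (f : F ≃ᵃ[F] F) (t : F) :
    f t = linearCoeff f * t + f 0 := by
  rw [coe_linearCoeff, mul_comm, ← linear_apply_eq_mul]
  exact congrFun f.toAffineMap.decomp t

theorem eq_one_of_linearCoeff_eq_one_of_apply_eq {f : F ≃ᵃ[F] F} (h : linearCoeff f = 1)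
    {t : F} (ht : f t = t) : f = 1 := by
  have h0 : f 0 = 0 := by
    rwa [apply_eq_linearCoeff_mul_add, h, Units.val_one, one_mul, add_eq_left] at ht
  ext s
  simp [apply_eq_linearCoeff_mul_add f s, h, h0]

theorem exists_apply_eq_self_of_linearCoeff_ne_one {f : F ≃ᵃ[F] F} (h : linearCoeff f ≠ 1) :
    ∃ t, f t = t := by
  have h1 : 1 - (linearCoeff f : F) ≠ 0 :=
    sub_ne_zero.mpr fun h' => h (Units.val_eq_one.mp h'.symm)
  refine ⟨f 0 / (1 - linearCoeff f), ?_⟩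
  rw [apply_eq_linearCoeff_mul_add]
  field_simp
  ring

theorem pow_apply_eq_self {f : F ≃ᵃ[F] F} {t : F} (ht : f t = t) (n : ℕ) : (f ^ n) t = t := by
  induction n with
  | zero => rfl
  | succ n ih => rw [pow_succ, coe_mul, Function.comp_apply, ht, ih]

theorem orderOf_eq_orderOf_linearCoeff {f : F ≃ᵃ[F] F} (h : linearCoeff f ≠ 1) :
    orderOf f = orderOf (linearCoeff f) := by
  obtain ⟨t, ht⟩ := exists_apply_eq_self_of_linearCoeff_ne_one h
  refine orderOf_eq_orderOf_iff.mpr fun n =>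
    ⟨fun hn => by rw [← map_pow, hn, map_one], fun hn => ?_⟩
  exact eq_one_of_linearCoeff_eq_one_of_apply_eq (by rwa [map_pow]) (pow_apply_eq_self ht n)

theorem linearCoeff_surjective : Function.Surjective (linearCoeff (F := F)) := fun u =>
  ⟨homothetyUnitsMulHom 0 u, by
    ext
    have := apply_eq_linearCoeff_mul_add (homothetyUnitsMulHom 0 u) 1
    simpa [coe_homothetyUnitsMulHom_apply, AffineMap.homothety_apply] using this.symm⟩

theorem linearCoeff_eq_one_of_commute {f g : F ≃ᵃ[F] F} (hg : linearCoeff g = 1) (hg1 : g ≠ 1)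
    (h : Commute f g) : linearCoeff f = 1 := by
  have hg0 : g 0 ≠ 0 := fun h0 => hg1 (eq_one_of_linearCoeff_eq_one_of_apply_eq hg h0)
  have := congrArg (· 0) h.eq
  simp only [coe_mul, Function.comp_apply] at this
  rw [apply_eq_linearCoeff_mul_add f, apply_eq_linearCoeff_mul_add g (f 0), hg, Units.val_one,
    one_mul, add_comm, add_left_cancel_iff, mul_eq_right₀ hg0] at this
  exact Units.val_eq_one.mp this

theorem zpowers_linearCoeff_eq_top {x y : F ≃ᵃ[F] F} (hgen : Subgroup.closure {x, y} = ⊤)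
    (hy : linearCoeff y = 1) : Subgroup.zpowers (linearCoeff x) = ⊤ := by
  rw [← (Subgroup.map_top_of_surjective _ linearCoeff_surjective), ← hgen, MonoidHom.map_closure,
    Set.image_pair, hy, Set.pair_comm, Subgroup.closure_insert_one, Subgroup.zpowers_eq_closure]

section CharTwo

variable [CharP F 2]

theorem linearCoeff_eq_one_of_sq_eq_one {f : F ≃ᵃ[F] F} (h : f ^ 2 = 1) : linearCoeff f = 1 := by
  have : (linearCoeff f : F) ^ 2 = 1 ^ 2 := by
    rw [← Units.val_pow_eq_pow_val, ← map_pow, h, map_one, Units.val_one, one_pow]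
  exact Units.val_eq_one.mp (CharTwo.sq_injective this)

theorem orderOf_eq_two_of_linearCoeff_eq_one {f : F ≃ᵃ[F] F} (h : linearCoeff f = 1)
    (hf : f ≠ 1) : orderOf f = 2 := by
  refine orderOf_eq_prime ?_ hf
  have hf1 (t : F) : f t = t + f 0 := by simp [apply_eq_linearCoeff_mul_add f t, h]
  ext t
  rw [sq, coe_mul, Function.comp_apply, hf1, hf1 t, add_assoc, CharTwo.add_self_eq_zero, add_zero]
  rfl

end CharTwo

end AffineEquiv

open AffineEquiv in
/-- Every generating pair `(x,y)` with `y` an involution of the affine group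
`AGL₁(2^e) = (F ≃ᵃ[F] F)`, `F = 𝔽_{2^e}`, `e ≥ 2`, has `x` and `x*y` of order
`2^e - 1` and commutator of order `2`: all maps in `O(AGL₁(2^e))` have type
`{2^e-1, 2^e-1}` and Petrie length `4`. -/
theorem agl1_map_types (e : ℕ) (he : 2 ≤ e)
    (x y : GaloisField 2 e ≃ᵃ[GaloisField 2 e] GaloisField 2 e)
    (hgen : Subgroup.closure
      ({x, y} : Set (GaloisField 2 e ≃ᵃ[GaloisField 2 e] GaloisField 2 e)) = ⊤)
    (hy : orderOf y = 2) :
    orderOf x = 2 ^ e - 1 ∧ orderOf (x * y) = 2 ^ e - 1 ∧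
      orderOf (x⁻¹ * y⁻¹ * x * y) = 2 := by
  have hy1 : linearCoeff y = 1 :=
    linearCoeff_eq_one_of_sq_eq_one (orderOf_dvd_iff_pow_eq_one.mp hy.dvd)
  have hx : orderOf (linearCoeff x) = 2 ^ e - 1 := by
    rw [orderOf_eq_card_of_forall_mem_zpowers fun u => zpowers_linearCoeff_eq_top hgen hy1 ▸
      Subgroup.mem_top u, Nat.card_units, GaloisField.card 2 e (by omega)]
  have hx1 : linearCoeff x ≠ 1 := fun h => by
    have : 2 ^ 2 ≤ 2 ^ e := Nat.pow_le_pow_right two_pos he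
    rw [h, orderOf_one] at hx
    omega
  have hxy : linearCoeff (x * y) = linearCoeff x := by rw [map_mul, hy1, mul_one]
  refine ⟨(orderOf_eq_orderOf_linearCoeff hx1).trans hx, ?_, ?_⟩
  · rw [orderOf_eq_orderOf_linearCoeff (hxy ▸ hx1), hxy, hx]
  · refine orderOf_eq_two_of_linearCoeff_eq_one (by simp [hy1]) fun h => hx1 ?_
    refine linearCoeff_eq_one_of_commute hy1 (by rintro rfl; simp at hy) ?_
    calc x * y = y * x * (x⁻¹ * y⁻¹ * x * y) := by group
      _ = y * x := by rw [h, mul_one]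
end

section
/- Let e ≥ 2, q = 2^e, F = GaloisField 2 e, and let G be the one-dimensional affine group AGL₁(q), realized as the group of affine self-equivalences F ≃ᵃ[F] F. Then the number of generating pairs (x,y) of G with orderOf y = 2 is φ(q−1)·q·(q−1), where φ is Euler's totient function, and the number of Aut-equivalence classes of such pairs is φ(q−1)/e. (There are exactly φ(2^e − 1)/e orientably regular maps with orientation-preserving automorphism group AGL₁(2^e); in particular for e = 2 there is a single such map, the tetrahedron.) -/
/-- Generating pairs `(x,y)` with `y` of order 2, in any group. -/
def IsMapPair {G : Type} [Group G] (p : G × G) : Prop :=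
  Subgroup.closure ({p.1, p.2} : Set G) = ⊤ ∧ orderOf p.2 = 2

/-- Aut-equivalence of pairs satisfying a property `P`. -/
def AutEquivOn {G : Type} [Group G] (P : G × G → Prop)
    (p q : {p : G × G // P p}) : Prop :=
  ∃ α : G ≃* G, α p.1.1 = q.1.1 ∧ α p.1.2 = q.1.2

/-!
An automorphism of `AGL₁(q)` permutes the involutions, which in characteristic two are exactly
the nontrivial translations `t ↦ t + c`. The additive bijection of `F` it induces on them,
normalised at `1`, is a field automorphism `σ`, and the automorphism is conjugation by a
semilinear map `t ↦ u σ(t) + m`; so `Aut AGL₁(q) ≅ AΓL₁(q)` has order `e q (q - 1)`.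
A pair `(x, t ↦ t + c)` generates `AGL₁(q)` iff the slope of `x` generates `Fˣ`, which gives
`φ(q - 1) q (q - 1)` generating pairs. Automorphisms act freely on generating pairs, so there
are `φ(q - 1) / e` orbits.
-/

theorem card_zpowers_eq_top {G : Type*} [Group G] [Finite G] [IsCyclic G] :
    Nat.card {g : G // Subgroup.zpowers g = ⊤} = (Nat.card G).totient := by
  have : Fintype G := Fintype.ofFinite G
  classical
  rw [Nat.card_congr (Equiv.subtypeEquivRight fun g => ⟨orderOf_eq_card_of_zpowers_eq_top,
      fun h => Subgroup.eq_top_of_card_eq _ (by rw [Nat.card_zpowers, h])⟩),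
    Nat.card_eq_fintype_card, Fintype.card_subtype, Nat.card_eq_fintype_card]
  exact IsCyclic.card_orderOf_eq_totient dvd_rfl

theorem card_ringEquiv_galoisField (p n : ℕ) [Fact p.Prime] (hn : n ≠ 0) :
    Nat.card (GaloisField p n ≃+* GaloisField p n) = n := by
  let algEquivOfRingEquiv : (GaloisField p n ≃+* GaloisField p n) ≃
      (GaloisField p n ≃ₐ[ZMod p] GaloisField p n) :=
    { toFun := fun σ => AlgEquiv.ofRingEquiv (f := σ) fun x =>
        RingHom.congr_fun (Subsingleton.elim (σ.toRingHom.comp (algebraMap _ _)) _) x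
      invFun := AlgEquiv.toRingEquiv
      left_inv := fun _ => rfl
      right_inv := fun _ => rfl }
  rw [Nat.card_congr algEquivOfRingEquiv, IsGalois.card_aut_eq_finrank, GaloisField.finrank p hn]

section AutAction

variable {G : Type} [Group G]

theorem IsMapPair.map {p : G × G} (hp : IsMapPair p) (α : G ≃* G) :
    IsMapPair (α p.1, α p.2) := by
  refine ⟨?_, by rw [α.orderOf_eq]; exact hp.2⟩
  rw [show ({α p.1, α p.2} : Set G) = α.toMonoidHom '' {p.1, p.2} by simp [Set.image_pair],
    ← MonoidHom.map_closure, hp.1]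
  exact Subgroup.map_top_of_surjective _ α.surjective

instance : MulAction (G ≃* G) {p : G × G // IsMapPair p} where
  smul α p := ⟨(α p.1.1, α p.1.2), p.2.map α⟩
  one_smul _ := rfl
  mul_smul _ _ _ := rfl

theorem stabilizer_mapPair_eq_bot (p : {p : G × G // IsMapPair p}) :
    MulAction.stabilizer (G ≃* G) p = ⊥ := by
  rw [eq_bot_iff]
  intro α hα
  have hfix : α p.1.1 = p.1.1 ∧ α p.1.2 = p.1.2 := Prod.ext_iff.1 (congrArg Subtype.val hα)
  refine MulEquiv.toMonoidHom_injective (MonoidHom.eq_of_eqOn_dense p.2.1 ?_)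
  rintro _ (rfl | rfl)
  exacts [hfix.1, hfix.2]

theorem card_mapPairs_eq_card_quot_mul_card_mulEquiv :
    Nat.card {p : G × G // IsMapPair p} =
      Nat.card (Quot (AutEquivOn (G := G) IsMapPair)) * Nat.card (G ≃* G) := by
  have hrel (p q : {p : G × G // IsMapPair p}) :
      AutEquivOn IsMapPair p q ↔ (MulAction.orbitRel (G ≃* G) _).r p q := by
    rw [MulAction.orbitRel_apply, MulAction.mem_orbit_symm]
    exact exists_congr fun α => by rw [Subtype.ext_iff, Prod.ext_iff]; rfl
  rw [Nat.card_congr (MulAction.selfEquivOrbitsQuotientProd stabilizer_mapPair_eq_bot),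
    Nat.card_prod, Nat.card_congr (Quot.congrRight hrel)]
  rfl

end AutAction

namespace AGL1

section Coordinates

variable {F : Type*} [Field F]

def mk (a : Fˣ) (b : F) : F ≃ᵃ[F] F :=
  (LinearEquiv.smulOfUnit a).toAffineEquiv.trans (AffineEquiv.constVAdd F F b)

@[simp] theorem mk_apply (a : Fˣ) (b t : F) : mk a b t = a * t + b := by
  simp [mk, add_comm, LinearEquiv.smulOfUnit, Units.smul_def]

theorem apply_eq_mul_add (g : F ≃ᵃ[F] F) (t : F) : g t = (g 1 - g 0) * t + g 0 := by
  have hdecomp := AffineMap.decomp g.toAffineMap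
  have h1 := congrFun hdecomp 1
  have ht := congrFun hdecomp t
  simp only [AffineEquiv.coe_toAffineMap, Pi.add_apply] at h1 ht
  rw [ht, h1, add_sub_cancel_right, mul_comm, ← smul_eq_mul, ← map_smul, smul_eq_mul, mul_one]

def slope : (F ≃ᵃ[F] F) →* Fˣ where
  toFun g := Units.mk0 (g 1 - g 0) (sub_ne_zero.2 (g.injective.ne one_ne_zero))
  map_one' := by ext; simp
  map_mul' g h := by
    ext
    simp only [AffineEquiv.coe_mul, Function.comp_apply, Units.val_mk0, Units.val_mul]
    rw [apply_eq_mul_add g (h 1), apply_eq_mul_add g (h 0)]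
    ring

@[simp] theorem coe_slope (g : F ≃ᵃ[F] F) : (slope g : F) = g 1 - g 0 := rfl

@[simp] theorem slope_mk (a : Fˣ) (b : F) : slope (mk a b) = a := by ext; simp

theorem mk_slope (g : F ≃ᵃ[F] F) : mk (slope g) (g 0) = g := by
  ext t; simp [apply_eq_mul_add g t]

theorem mk_inj {a a' : Fˣ} {b b' : F} : mk a b = mk a' b' ↔ a = a' ∧ b = b' :=
  ⟨fun h => ⟨by simpa using congrArg slope h, by simpa using congrArg (· 0) h⟩,
    by rintro ⟨rfl, rfl⟩; rfl⟩

theorem mk_mul (a a' : Fˣ) (b b' : F) : mk a b * mk a' b' = mk (a * a') (a * b' + b) := by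
  ext t; simp; ring

@[simp] theorem mk_one_zero : (mk 1 0 : F ≃ᵃ[F] F) = 1 := by ext t; simp

theorem eq_mk_one_of_slope_eq_one {g : F ≃ᵃ[F] F} (h : slope g = 1) : g = mk 1 (g 0) := by
  rw [← h, mk_slope]

theorem mk_conj (u a : Fˣ) (v b : F) :
    mk u v * mk a b * (mk u v)⁻¹ = mk a (u * b + v * (1 - a)) := by
  rw [mul_inv_eq_iff_eq_mul, mk_mul, mk_mul, mk_inj, mul_comm]
  exact ⟨rfl, by ring⟩

theorem conj_mk_one (g : F ≃ᵃ[F] F) (c : F) : g * mk 1 c * g⁻¹ = mk 1 (slope g * c) := by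
  conv_lhs => rw [← mk_slope g]
  rw [mk_conj, Units.val_one, sub_self, mul_zero, add_zero]

theorem closure_pair_eq_top_iff {x : F ≃ᵃ[F] F} {c : F} (hc : c ≠ 0) :
    Subgroup.closure {x, mk 1 c} = ⊤ ↔ Subgroup.zpowers (slope x) = ⊤ := by
  set H := Subgroup.closure {x, mk 1 c}
  have hx : x ∈ H := Subgroup.subset_closure (Set.mem_insert _ _)
  have hc' : mk 1 c ∈ H := Subgroup.subset_closure (Set.mem_insert_of_mem _ rfl)
  constructor
  · intro h
    have hle : H ≤ (Subgroup.zpowers (slope x)).comap slope := by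
      rw [Subgroup.closure_le]
      rintro _ (rfl | rfl)
      · exact Subgroup.mem_zpowers _
      · simp
    rw [eq_top_iff]
    rintro u -
    have hu := hle (h ▸ Subgroup.mem_top (mk u 0))
    rwa [Subgroup.mem_comap, slope_mk] at hu
  · intro h
    have hgen (u : Fˣ) : ∃ m : ℤ, slope (x ^ m) = u := by
      obtain ⟨m, hm⟩ := Subgroup.mem_zpowers_iff.1 (h ▸ Subgroup.mem_top u)
      exact ⟨m, by rw [map_zpow, hm]⟩
    have htrans (d : F) : mk 1 d ∈ H := by
      rcases eq_or_ne d 0 with rfl | hd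
      · rw [mk_one_zero]; exact H.one_mem
      obtain ⟨m, hm⟩ := hgen (Units.mk0 (d / c) (div_ne_zero hd hc))
      have hconj := conj_mk_one (x ^ m) c
      rw [hm, Units.val_mk0, div_mul_cancel₀ d hc] at hconj
      exact hconj ▸ H.mul_mem (H.mul_mem (H.zpow_mem hx m) hc') (H.inv_mem (H.zpow_mem hx m))
    rw [eq_top_iff]
    rintro g -
    obtain ⟨m, hm⟩ := hgen (slope g)
    have hslope : slope (g * (x ^ m)⁻¹) = 1 := by rw [map_mul, map_inv, hm, mul_inv_cancel]
    rw [← Subgroup.mul_mem_cancel_right H (H.inv_mem (H.zpow_mem hx m)),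
      eq_mk_one_of_slope_eq_one hslope]
    exact htrans _

end Coordinates

section Semilinear

variable {F : Type*} [Field F]

def liftAut (σ : F ≃+* F) : (F ≃ᵃ[F] F) ≃* (F ≃ᵃ[F] F) where
  toFun g := mk (Units.map σ (slope g)) (σ (g 0))
  invFun g := mk (Units.map σ.symm (slope g)) (σ.symm (g 0))
  left_inv g := by
    conv_rhs => rw [← mk_slope g]
    rw [mk_inj]
    exact ⟨Units.ext (by simp), by simp⟩
  right_inv g := by
    conv_rhs => rw [← mk_slope g]
    rw [mk_inj]
    exact ⟨Units.ext (by simp), by simp⟩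
  map_mul' g h := by
    rw [mk_mul, mk_inj]
    exact ⟨by simp, by simp [apply_eq_mul_add g (h 0)]⟩

theorem liftAut_mk (σ : F ≃+* F) (a : Fˣ) (b : F) :
    liftAut σ (mk a b) = mk (Units.map σ a) (σ b) := by
  simp [liftAut]

/-- Conjugation by the semilinear map `t ↦ u * σ t + m`. -/
def semilinearAut (σ : F ≃+* F) (u : Fˣ) (m : F) : (F ≃ᵃ[F] F) ≃* (F ≃ᵃ[F] F) :=
  MulAut.conj (mk u m) * liftAut σ

theorem semilinearAut_mk (σ : F ≃+* F) (u a : Fˣ) (m b : F) :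
    semilinearAut σ u m (mk a b) = mk (Units.map σ a) (u * σ b + m * (1 - σ a)) := by
  rw [semilinearAut, MulAut.mul_apply, liftAut_mk, MulAut.conj_apply, mk_conj]
  rfl

theorem one_sub_map_ne_zero (σ : F ≃+* F) {a : Fˣ} (ha : a ≠ 1) : (1 : F) - σ a ≠ 0 := by
  rwa [sub_ne_zero, ne_comm, ← map_one σ, σ.injective.ne_iff, ← Units.val_one, ne_eq,
    Units.val_inj]

theorem semilinearAut_injective {a : Fˣ} (ha : a ≠ 1) :
    Function.Injective fun t : (F ≃+* F) × Fˣ × F => semilinearAut t.1 t.2.1 t.2.2 := by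
  rintro ⟨σ, u, m⟩ ⟨σ', u', m'⟩ h
  have htrans (c : F) : u * σ c = u' * σ' c := by
    have := congrArg (· (mk 1 c)) h
    simpa [semilinearAut_mk, mk_inj] using this
  have hu : u = u' := Units.ext (by simpa using htrans 1)
  subst hu
  have hσ : σ = σ' := RingEquiv.ext fun c => mul_left_cancel₀ u.ne_zero (htrans c)
  subst hσ
  have := congrArg (· (mk a 0)) h
  simp only [semilinearAut_mk, mk_inj, map_zero, mul_zero, zero_add, true_and] at this
  simp [mul_right_cancel₀ (one_sub_map_ne_zero σ ha) this]

end Semilinear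

section CharTwo

variable {F : Type*} [Field F] [CharP F 2]

theorem orderOf_mk_eq_two_iff {a : Fˣ} {b : F} : orderOf (mk a b) = 2 ↔ a = 1 ∧ b ≠ 0 := by
  have hsq : a ^ 2 = 1 ↔ a = 1 := by
    rw [← Units.val_inj, Units.val_pow_eq_pow_val, Units.val_one, ← one_pow 2, CharTwo.sq_inj,
      Units.val_eq_one]
  rw [orderOf_eq_prime_iff, sq, mk_mul, ← mk_one_zero, mk_inj, ne_eq, mk_inj, ← sq, hsq]
  constructor
  · rintro ⟨⟨rfl, -⟩, h⟩
    exact ⟨rfl, fun hb => h ⟨rfl, hb⟩⟩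
  · rintro ⟨rfl, hb⟩
    exact ⟨⟨rfl, by simp [CharTwo.add_self_eq_zero]⟩, fun h => hb h.2⟩

theorem orderOf_eq_two_iff {y : F ≃ᵃ[F] F} : orderOf y = 2 ↔ slope y = 1 ∧ y 0 ≠ 0 := by
  conv_lhs => rw [← mk_slope y]
  exact orderOf_mk_eq_two_iff

variable (α : (F ≃ᵃ[F] F) ≃* (F ≃ᵃ[F] F))

theorem slope_map_mk_one (c : F) : slope (α (mk 1 c)) = 1 := by
  rcases eq_or_ne c 0 with rfl | hc
  · simp
  · have h2 : orderOf (α (mk 1 c)) = 2 := by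
      rw [MulEquiv.orderOf_eq, orderOf_mk_eq_two_iff]
      exact ⟨rfl, hc⟩
    exact (orderOf_eq_two_iff.1 h2).1

def translationPart : F ≃+ F where
  toFun c := α (mk 1 c) 0
  invFun c := α.symm (mk 1 c) 0
  left_inv c := by
    simp only
    rw [← eq_mk_one_of_slope_eq_one (slope_map_mk_one α c), MulEquiv.symm_apply_apply]
    simp
  right_inv c := by
    simp only
    rw [← eq_mk_one_of_slope_eq_one (slope_map_mk_one α.symm c), MulEquiv.apply_symm_apply]
    simp
  map_add' c d := by
    have h : mk 1 (c + d) = mk 1 d * mk 1 c := by rw [mk_mul, mk_inj]; simp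
    simp only [h, map_mul, AffineEquiv.coe_mul, Function.comp_apply]
    rw [eq_mk_one_of_slope_eq_one (slope_map_mk_one α d), mk_apply]
    simp

theorem map_mk_one (c : F) : α (mk 1 c) = mk 1 (translationPart α c) :=
  eq_mk_one_of_slope_eq_one (slope_map_mk_one α c)

theorem translationPart_slope_mul (g : F ≃ᵃ[F] F) (c : F) :
    translationPart α (slope g * c) = slope (α g) * translationPart α c := by
  have h := congrArg α (conj_mk_one g c)
  rw [map_mul, map_mul, map_inv, map_mk_one, map_mk_one, conj_mk_one, mk_inj] at h
  exact h.2.symm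

theorem translationPart_one_ne_zero : translationPart α 1 ≠ 0 :=
  (translationPart α).map_ne_zero_iff.2 one_ne_zero

/-- Conjugation turns multiplication by `slope g` on the translations into multiplication by
`slope (α g)`, which makes the normalised translation part multiplicative. -/
def fieldAut : F ≃+* F :=
  { (translationPart α).toEquiv.trans
      (Equiv.mulLeft₀ _ (inv_ne_zero (translationPart_one_ne_zero α))) with
    map_mul' a c := by
      show (translationPart α 1)⁻¹ * translationPart α (a * c) =
        (translationPart α 1)⁻¹ * translationPart α a *
          ((translationPart α 1)⁻¹ * translationPart α c)
      rcases eq_or_ne a 0 with rfl | ha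
      · simp
      have key := translationPart_slope_mul α (mk (Units.mk0 a ha) 0)
      simp only [slope_mk, Units.val_mk0] at key
      have h1 := key 1
      rw [mul_one] at h1
      rw [key c, h1]
      field_simp [translationPart_one_ne_zero α]
    map_add' a c := by
      show (translationPart α 1)⁻¹ * translationPart α (a + c) =
        (translationPart α 1)⁻¹ * translationPart α a +
          (translationPart α 1)⁻¹ * translationPart α c
      rw [map_add, mul_add] }

theorem fieldAut_apply (c : F) :
    fieldAut α c = (translationPart α 1)⁻¹ * translationPart α c := rfl

theorem coe_slope_map (g : F ≃ᵃ[F] F) : (slope (α g) : F) = fieldAut α (slope g) := by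
  rw [fieldAut_apply, ← mul_one (slope g : F), translationPart_slope_mul,
    mul_comm (slope (α g) : F), inv_mul_cancel_left₀ (translationPart_one_ne_zero α)]

theorem semilinearAut_surjective {a : Fˣ} (hgen : Subgroup.zpowers a = ⊤) (ha : a ≠ 1) :
    Function.Surjective fun t : (F ≃+* F) × Fˣ × F => semilinearAut t.1 t.2.1 t.2.2 := by
  intro α
  have hsub := one_sub_map_ne_zero (fieldAut α) ha
  refine ⟨(fieldAut α, Units.mk0 _ (translationPart_one_ne_zero α),
    α (mk a 0) 0 / (1 - fieldAut α a)), ?_⟩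
  apply MulEquiv.toMonoidHom_injective
  have hgen' := (closure_pair_eq_top_iff (x := mk a 0) (one_ne_zero' F)).2 (by rwa [slope_mk])
  refine MonoidHom.eq_of_eqOn_dense hgen' ?_
  rintro _ (rfl | rfl) <;> simp only [MulEquiv.coe_toMonoidHom]
  · conv_rhs => rw [← mk_slope (α (mk a 0))]
    rw [semilinearAut_mk, mk_inj]
    exact ⟨Units.ext (by rw [coe_slope_map, slope_mk]; rfl),
      by rw [map_zero, mul_zero, zero_add, div_mul_cancel₀ _ hsub]⟩
  · rw [semilinearAut_mk, map_mk_one α, mk_inj]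
    simp [fieldAut_apply]

theorem card_mulEquiv [Finite F] (hF : 2 < Nat.card F) :
    Nat.card ((F ≃ᵃ[F] F) ≃* (F ≃ᵃ[F] F)) =
      Nat.card (F ≃+* F) * Nat.card Fˣ * Nat.card F := by
  obtain ⟨a, ha⟩ := IsCyclic.exists_generator (α := Fˣ)
  have ha1 : a ≠ 1 := by
    rintro rfl
    have := orderOf_eq_card_of_forall_mem_zpowers ha
    rw [orderOf_one, Nat.card_units] at this
    omega
  have hbij := And.intro (semilinearAut_injective (F := F) ha1)
    (semilinearAut_surjective ((Subgroup.eq_top_iff' _).2 ha) ha1)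
  rw [← Nat.card_congr (Equiv.ofBijective _ hbij), Nat.card_prod, Nat.card_prod, mul_assoc]

end CharTwo

section MapPairs

variable {F : Type} [Field F] [CharP F 2]

theorem isMapPair_iff {x y : F ≃ᵃ[F] F} :
    IsMapPair (x, y) ↔ Subgroup.zpowers (slope x) = ⊤ ∧ slope y = 1 ∧ y 0 ≠ 0 := by
  simp only [IsMapPair, orderOf_eq_two_iff]
  refine and_congr_left fun ⟨h1, h0⟩ => ?_
  rw [eq_mk_one_of_slope_eq_one h1, closure_pair_eq_top_iff h0]

def mapPairEquiv : {p : (F ≃ᵃ[F] F) × (F ≃ᵃ[F] F) // IsMapPair p} ≃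
    {a : Fˣ // Subgroup.zpowers a = ⊤} × F × {c : F // c ≠ 0} where
  toFun p := (⟨slope p.1.1, (isMapPair_iff.1 p.2).1⟩, p.1.1 0,
    ⟨p.1.2 0, (isMapPair_iff.1 p.2).2.2⟩)
  invFun q := ⟨(mk q.1 q.2.1, mk 1 q.2.2),
    isMapPair_iff.2 ⟨by rw [slope_mk]; exact q.1.2, slope_mk _ _, by simpa using q.2.2.2⟩⟩
  left_inv p := Subtype.ext <|
    Prod.ext (mk_slope _) (eq_mk_one_of_slope_eq_one (isMapPair_iff.1 p.2).2.1).symm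
  right_inv q := by simp

theorem card_mapPairs [Finite F] :
    Nat.card {p : (F ≃ᵃ[F] F) × (F ≃ᵃ[F] F) // IsMapPair p} =
      (Nat.card Fˣ).totient * Nat.card F * Nat.card Fˣ := by
  rw [Nat.card_congr mapPairEquiv, Nat.card_prod, Nat.card_prod, card_zpowers_eq_top,
    ← Nat.card_congr unitsEquivNeZero, mul_assoc]

end MapPairs

end AGL1

/-- For `e ≥ 2`, `q = 2^e`, the affine group `AGL₁(q) = (F ≃ᵃ[F] F)` has exactly
`φ(q-1)·q·(q-1)` generating pairs `(x,y)` with `y` an involution, falling into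
exactly `φ(q-1)/e` Aut-equivalence classes. -/
theorem agl1_count_maps (e : ℕ) (he : 2 ≤ e) :
    Nat.card {p : (GaloisField 2 e ≃ᵃ[GaloisField 2 e] GaloisField 2 e) ×
        (GaloisField 2 e ≃ᵃ[GaloisField 2 e] GaloisField 2 e) // IsMapPair p} =
      Nat.totient (2 ^ e - 1) * 2 ^ e * (2 ^ e - 1) ∧
    Nat.card (Quot (AutEquivOn
      (G := GaloisField 2 e ≃ᵃ[GaloisField 2 e] GaloisField 2 e) IsMapPair)) =
      Nat.totient (2 ^ e - 1) / e := by
  have hq : 2 ^ 2 ≤ 2 ^ e := Nat.pow_le_pow_right two_pos he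
  have hF : Nat.card (GaloisField 2 e) = 2 ^ e := GaloisField.card 2 e (by omega)
  have hFu : Nat.card (GaloisField 2 e)ˣ = 2 ^ e - 1 := by rw [Nat.card_units, hF]
  have hpairs := AGL1.card_mapPairs (F := GaloisField 2 e)
  rw [hF, hFu] at hpairs
  have haut := AGL1.card_mulEquiv (F := GaloisField 2 e) (by omega)
  rw [card_ringEquiv_galoisField 2 e (by omega), hFu, hF] at haut
  have horbits := card_mapPairs_eq_card_quot_mul_card_mulEquiv
    (G := GaloisField 2 e ≃ᵃ[GaloisField 2 e] GaloisField 2 e)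
  rw [hpairs, haut] at horbits
  refine ⟨hpairs, (Nat.div_eq_of_eq_mul_left (by omega) ?_).symm⟩
  have hpos : 0 < 2 ^ e * (2 ^ e - 1) := Nat.mul_pos (by omega) (by omega)
  exact Nat.eq_of_mul_eq_mul_right hpos (by linarith)
end

section
/- Let e > 2, q = 2^e, F = GaloisField 2 e, and let G be the one-dimensional affine group AGL₁(q), realized as the group of affine self-equivalences F ≃ᵃ[F] F. Then for every generating pair (x,y) of G with orderOf y = 2, there is no group automorphism α of G with α x = x⁻¹ and α y = y⁻¹. (All the orientably regular maps with orientation-preserving automorphism group AGL₁(2^e), e > 2, are chiral.) -/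
/-!
In characteristic 2 an affine map `t ↦ a t + b` squares to the identity exactly when `a = 1`, so
the translations `τ_b` are the elements of square one and every automorphism `α` of `AGL₁(F)`
restricts to them: `α τ_b = τ_{φ b}` for an additive bijection `φ` of `F`. As `y` is a
translation, the multiplier `a` of `x` generates `Fˣ`. If `α x = x⁻¹`, applying `α` to
`x τ_b x⁻¹ = τ_{a b}` gives `φ (a b) = a⁻¹ φ b`, hence `φ u = u⁻¹ φ 1` for every `u ≠ 0`.
Additivity of `φ` at `1 + a` then forces `a² + a + 1 = 0`, so `a³ = 1`, which is impossible for a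
generator of `Fˣ` once `|F| > 4`.
-/

theorem AddMonoidHom.pow_three_eq_one_of_map_eq_inv_mul {F : Type*} [Field F] (φ : F →+ F)
    (h1 : φ 1 ≠ 0) (hφ : ∀ {u}, u ≠ 0 → φ u = u⁻¹ * φ 1) {u : F} (hu : u ≠ 0)
    (hu1 : 1 + u ≠ 0) : u ^ 3 = 1 := by
  have hadd := φ.map_add 1 u
  rw [hφ hu1, hφ hu] at hadd
  have hinv : (1 + u)⁻¹ = 1 + u⁻¹ := mul_right_cancel₀ h1 (by rw [hadd]; ring)
  field_simp at hinv
  linear_combination (1 - u) * hinv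

namespace AffineEquiv

variable {F : Type*} [Field F]

theorem apply_eq_linear_one_mul_add (g : F ≃ᵃ[F] F) (t : F) : g t = g.linear 1 * t + g 0 := by
  rw [← LinearEquiv.coe_coe, Dual.apply_one_mul_eq, LinearEquiv.coe_coe]
  simpa using g.map_vadd 0 t

def multiplier : (F ≃ᵃ[F] F) →* Fˣ where
  toFun g := Units.mk0 (g.linear 1) (g.linear.map_ne_zero_iff.2 one_ne_zero)
  map_one' := Units.ext rfl
  map_mul' g h := Units.ext (Dual.apply_one_mul_eq (g.linear : F →ₗ[F] F) (h.linear 1)).symm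

@[simp]
theorem coe_multiplier (g : F ≃ᵃ[F] F) : (multiplier g : F) = g.linear 1 := rfl

theorem multiplier_surjective : Function.Surjective (multiplier : (F ≃ᵃ[F] F) →* Fˣ) :=
  fun u => ⟨homothetyUnitsMulHom 0 u, Units.ext <| by
    simpa [AffineMap.homothety_apply] using
      (apply_eq_linear_one_mul_add (homothetyUnitsMulHom 0 u) 1).symm⟩

theorem apply_eq_add_of_multiplier_eq_one {g : F ≃ᵃ[F] F} (hg : multiplier g = 1) (t : F) :
    g t = t + g 0 := by
  rw [apply_eq_linear_one_mul_add, ← coe_multiplier, hg, Units.val_one, one_mul]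

theorem eq_constVAdd_of_multiplier_eq_one {g : F ≃ᵃ[F] F} (hg : multiplier g = 1) :
    g = constVAdd F F (g 0) :=
  ext fun t => by rw [apply_eq_add_of_multiplier_eq_one hg, constVAdd_apply, vadd_eq_add, add_comm]

theorem mul_constVAdd_mul_inv (g : F ≃ᵃ[F] F) (b : F) :
    g * constVAdd F F b * g⁻¹ = constVAdd F F (multiplier g * b) := by
  ext t
  obtain ⟨s, rfl⟩ := g.surjective t
  simp only [coe_mul, Function.comp_apply, constVAdd_apply, vadd_eq_add, coe_multiplier]
  rw [inv_def, symm_apply_apply, apply_eq_linear_one_mul_add,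
    apply_eq_linear_one_mul_add g s]
  ring

theorem multiplier_eq_one_of_sq_eq_one [CharP F 2] {g : F ≃ᵃ[F] F} (hg : g ^ 2 = 1) :
    multiplier g = 1 :=
  Units.ext <| CharTwo.sq_injective <| by simpa using congrArg Units.val (congrArg multiplier hg)

theorem zpowers_multiplier_eq_top {x y : F ≃ᵃ[F] F} (hgen : Subgroup.closure {x, y} = ⊤)
    (hy : multiplier y = 1) : Subgroup.zpowers (multiplier x) = ⊤ := by
  rw [← Subgroup.map_top_of_surjective _ multiplier_surjective, ← hgen, MonoidHom.map_closure,
    Set.image_pair, hy, Subgroup.zpowers_eq_closure, Set.pair_comm, Subgroup.closure_insert_one]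

section CharTwo

variable [CharP F 2] (α : (F ≃ᵃ[F] F) ≃* (F ≃ᵃ[F] F))

theorem multiplier_map_constVAdd (b : F) : multiplier (α (constVAdd F F b)) = 1 :=
  multiplier_eq_one_of_sq_eq_one <| by
    rw [← map_pow, ← constVAdd_nsmul, CharTwo.two_nsmul, constVAdd_zero, ← one_def, map_one]

def translationMap : F →+ F where
  toFun b := α (constVAdd F F b) 0
  map_zero' := by simp [← one_def]
  map_add' b c := by
    have hmul : constVAdd F F (b + c) = constVAdd F F b * constVAdd F F c :=
      (constVAddHom F F).map_mul (.ofAdd b) (.ofAdd c)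
    rw [hmul, map_mul, coe_mul, Function.comp_apply,
      apply_eq_add_of_multiplier_eq_one (multiplier_map_constVAdd α b), add_comm]

theorem map_constVAdd (b : F) : α (constVAdd F F b) = constVAdd F F (translationMap α b) :=
  eq_constVAdd_of_multiplier_eq_one (multiplier_map_constVAdd α b)

theorem translationMap_injective : Function.Injective (translationMap α) := fun b c h => by
  have : α (constVAdd F F b) = α (constVAdd F F c) := by rw [map_constVAdd, map_constVAdd, h]
  simpa [constVAdd_apply] using congrArg (· 0) (α.injective this)

variable {α} {x : F ≃ᵃ[F] F}

theorem translationMap_multiplier_mul (hα : α x = x⁻¹) (b : F) :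
    translationMap α (multiplier x * b) = ↑(multiplier x)⁻¹ * translationMap α b := by
  have h : constVAdd F F (translationMap α (multiplier x * b)) =
      constVAdd F F (↑(multiplier x)⁻¹ * translationMap α b) := by
    rw [← map_constVAdd, ← mul_constVAdd_mul_inv, map_mul, map_mul, map_inv, hα, map_constVAdd,
      ← map_inv, mul_constVAdd_mul_inv]
  simpa using congrArg (· 0) h

theorem translationMap_eq_inv_mul (hx : Subgroup.zpowers (multiplier x) = ⊤) (hα : α x = x⁻¹)
    {u : F} (hu : u ≠ 0) : translationMap α u = u⁻¹ * translationMap α 1 := by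
  let H : Subgroup Fˣ :=
    { carrier := {u | ∀ b, translationMap α (u * b) = ↑u⁻¹ * translationMap α b}
      one_mem' := by simp
      mul_mem' := fun {u v} hu hv b => by
        simp only [Set.mem_ofPred_eq, Units.val_mul, mul_inv_rev] at hu hv ⊢
        rw [mul_assoc, hu, hv]
        ring
      inv_mem' := fun {u} hu b => by
        simp only [Set.mem_ofPred_eq, inv_inv] at hu ⊢
        have h := hu (↑u⁻¹ * b)
        rw [← mul_assoc, Units.mul_inv, one_mul] at h
        rw [h, ← mul_assoc, Units.mul_inv, one_mul] }
  have hH : multiplier x ∈ H := translationMap_multiplier_mul hα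
  have hu : Units.mk0 u hu ∈ H := (Subgroup.zpowers_le.2 hH) (hx ▸ Subgroup.mem_top _)
  simpa using hu 1

end CharTwo

theorem mulEquiv_apply_ne_inv_of_closure_eq_top [CharP F 2] (hF : 4 < Nat.card F)
    {x y : F ≃ᵃ[F] F} (hgen : Subgroup.closure {x, y} = ⊤) (hy : y ^ 2 = 1)
    (α : (F ≃ᵃ[F] F) ≃* (F ≃ᵃ[F] F)) : α x ≠ x⁻¹ := by
  intro hα
  set a := multiplier x
  have hx : Subgroup.zpowers a = ⊤ :=
    zpowers_multiplier_eq_top hgen (multiplier_eq_one_of_sq_eq_one hy)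
  have hord : orderOf a = Nat.card F - 1 := by
    rw [orderOf_eq_card_of_zpowers_eq_top hx, Nat.card_units]
  have ha1 : a ≠ 1 := by
    intro h
    rw [h, orderOf_one] at hord
    omega
  have h3 : a ^ 3 = 1 := Units.ext <| by
    push_cast
    exact (translationMap α).pow_three_eq_one_of_map_eq_inv_mul
      ((map_ne_zero_iff _ (translationMap_injective α)).2 one_ne_zero)
      (translationMap_eq_inv_mul hx hα) a.ne_zero
      (fun h => ha1 (Units.ext (CharTwo.add_eq_zero.1 h).symm))
  have h3le := Nat.le_of_dvd three_pos (orderOf_dvd_of_pow_eq_one h3)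
  omega

end AffineEquiv

/-- For `e > 2`, no generating pair `(x,y)` with `y` an involution of the affine
group `AGL₁(2^e) = (F ≃ᵃ[F] F)` admits an automorphism inverting both `x` and `y`:
all the corresponding orientably regular maps are chiral. -/
theorem agl1_maps_chiral (e : ℕ) (he : 2 < e)
    (x y : GaloisField 2 e ≃ᵃ[GaloisField 2 e] GaloisField 2 e)
    (hgen : Subgroup.closure
      ({x, y} : Set (GaloisField 2 e ≃ᵃ[GaloisField 2 e] GaloisField 2 e)) = ⊤)
    (hy : orderOf y = 2) :
    ¬ ∃ α : (GaloisField 2 e ≃ᵃ[GaloisField 2 e] GaloisField 2 e) ≃*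
        (GaloisField 2 e ≃ᵃ[GaloisField 2 e] GaloisField 2 e),
      α x = x⁻¹ ∧ α y = y⁻¹ := by
  rintro ⟨α, hαx, -⟩
  have hcard : 4 < Nat.card (GaloisField 2 e) := by
    rw [GaloisField.card 2 e (by omega)]
    exact (Nat.pow_lt_pow_right one_lt_two he : 2 ^ 2 < 2 ^ e)
  have hy2 : y ^ 2 = 1 := (congrArg (y ^ ·) hy).symm.trans (pow_orderOf_eq_one y)
  exact AffineEquiv.mulEquiv_apply_ne_inv_of_closure_eq_top hcard hgen hy2 α hαx
end
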